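/- arXiv:2504.04856 — 7 statements merged into one kernel-verified Lean document; each statement's English description precedes it below -/
import Mathlib

section
/- Let A and B be nonempty finite types, let p : A → ℝ satisfy 0 < p i for every i, let ρ be the A-indexed complex diagonal matrix with diagonal entries p i, and let ω be a Hermitian complex matrix indexed by A × B. Define the matrix J indexed by A × B by J (i,k) (j,l) = (2/(p i + p j)) · ω (i,k) (j,l). Then (ρ ⊗ₖ 1) ★ J = ω, J is Hermitian, and J is the unique matrix with this property: every matrix J' indexed by A × B satisfying (ρ ⊗ₖ 1) ★ J' = ω equals J. -/
open Matrix
open scoped Kronecker ComplexOrder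

noncomputable def jordan {n : Type*} [Fintype n] (X Y : Matrix n n ℂ) : Matrix n n ℂ :=
  (2 : ℂ)⁻¹ • (X * Y + Y * X)

noncomputable def trB {A B : Type*} [Fintype B] (M : Matrix (A × B) (A × B) ℂ) : Matrix A A ℂ :=
  Matrix.of fun i j => ∑ k, M (i, k) (j, k)

noncomputable def trA {A B : Type*} [Fintype A] (M : Matrix (A × B) (A × B) ℂ) : Matrix B B ℂ :=
  Matrix.of fun k l => ∑ i, M (i, k) (i, l)

def ptA {A B : Type*} (M : Matrix (A × B) (A × B) ℂ) : Matrix (A × B) (A × B) ℂ :=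
  Matrix.of fun p q => M (q.1, p.2) (p.1, q.2)

def swap (A : Type*) [DecidableEq A] : Matrix (A × A) (A × A) ℂ :=
  Matrix.of fun p q => if p.1 = q.2 ∧ p.2 = q.1 then 1 else 0

def IsState {A : Type*} [Fintype A] (ρ : Matrix A A ℂ) : Prop :=
  ρ.PosSemidef ∧ ρ.trace = 1

def IsJam {A B : Type*} [Fintype A] [Fintype B] [DecidableEq A]
    (J : Matrix (A × B) (A × B) ℂ) : Prop :=
  (ptA J).PosSemidef ∧ trB J = 1

noncomputable def cost {A B : Type*} [Fintype A] [Fintype B] [DecidableEq A] [DecidableEq B]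
    (K : Matrix (A × B) (A × B) ℂ) (ρ : Matrix A A ℂ) (σ : Matrix B B ℂ) : ℝ :=
  sInf { r : ℝ | ∃ J : Matrix (A × B) (A × B) ℂ, IsJam J ∧
      trA ((ρ ⊗ₖ (1 : Matrix B B ℂ)) * J) = σ ∧
      r = (Matrix.trace (K * jordan (ρ ⊗ₖ (1 : Matrix B B ℂ)) J)).re }

/-! `ρ ⊗ₖ 1` is the diagonal matrix with entries `p i` at `(i, k)`, so its Jordan product with any
matrix multiplies the entry at `((i, k), (j, l))` by `(p i + p j) / 2`. As this factor is nonzero,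
the equation `(ρ ⊗ₖ 1) ★ J = ω` is solved uniquely entrywise, and its solution is the Hadamard
product of `ω` with the real symmetric matrix `2 / (p i + p j)`, hence Hermitian. -/

section JordanDiagonal

variable {n : Type*} [Fintype n] [DecidableEq n]

lemma jordan_diagonal_apply (d : n → ℂ) (M : Matrix n n ℂ) (x y : n) :
    jordan (diagonal d) M x y = 2⁻¹ * (d x + d y) * M x y := by
  simp only [jordan, Matrix.smul_apply, Matrix.add_apply, diagonal_mul, mul_diagonal, smul_eq_mul]
  ring

lemma jordan_diagonal_eq_iff {d : n → ℂ} (hd : ∀ x y, d x + d y ≠ 0) {M ω : Matrix n n ℂ} :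
    jordan (diagonal d) M = ω ↔ M = (of fun x y => 2 / (d x + d y)) ⊙ ω := by
  simp only [← Matrix.ext_iff, jordan_diagonal_apply, hadamard_apply, of_apply]
  refine forall₂_congr fun x y => ?_
  rw [div_mul_eq_mul_div, eq_div_iff (hd x y)]
  constructor
  · intro h
    linear_combination 2 * h
  · intro h
    linear_combination h / 2

end JordanDiagonal

lemma isHermitian_of_two_div_add {n : Type*} (d : n → ℝ) :
    (of fun x y => 2 / ((d x : ℂ) + d y)).IsHermitian := by
  ext x y
  simp [add_comm]

theorem stmt0_general {A B : Type*} [Fintype A] [Fintype B]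
    [DecidableEq A] [DecidableEq B]
    (p : A → ℝ) (hp : ∀ i, 0 < p i)
    (ω : Matrix (A × B) (A × B) ℂ) (hω : ω.IsHermitian)
    (J : Matrix (A × B) (A × B) ℂ)
    (hJ : ∀ i k j l, J (i, k) (j, l) = (2 / ((p i : ℂ) + (p j : ℂ))) * ω (i, k) (j, l)) :
    jordan ((Matrix.diagonal fun i => (p i : ℂ)) ⊗ₖ (1 : Matrix B B ℂ)) J = ω ∧
    J.IsHermitian ∧
    ∀ J' : Matrix (A × B) (A × B) ℂ,
      jordan ((Matrix.diagonal fun i => (p i : ℂ)) ⊗ₖ (1 : Matrix B B ℂ)) J' = ω → J' = J := by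
  set d : A × B → ℝ := fun x => p x.1
  have hkron :
      diagonal (fun i => (p i : ℂ)) ⊗ₖ (1 : Matrix B B ℂ) = diagonal fun x => (d x : ℂ) := by
    rw [← diagonal_one, diagonal_kronecker_diagonal]
    simp [d]
  have hd : ∀ x y, (d x : ℂ) + d y ≠ 0 := fun x y =>
    mod_cast (add_pos (hp x.1) (hp y.1)).ne'
  have hJω : J = (of fun x y => 2 / ((d x : ℂ) + d y)) ⊙ ω := by
    ext ⟨i, k⟩ ⟨j, l⟩
    exact hJ i k j l
  rw [hkron]
  exact ⟨(jordan_diagonal_eq_iff hd).2 hJω, hJω ▸ (isHermitian_of_two_div_add d).hadamard hω,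
    fun J' hJ' => ((jordan_diagonal_eq_iff hd).1 hJ').trans hJω.symm⟩

theorem stmt0 {A B : Type*} [Fintype A] [Fintype B] [Nonempty A] [Nonempty B]
    [DecidableEq A] [DecidableEq B]
    (p : A → ℝ) (hp : ∀ i, 0 < p i)
    (ω : Matrix (A × B) (A × B) ℂ) (hω : ω.IsHermitian)
    (J : Matrix (A × B) (A × B) ℂ)
    (hJ : ∀ i k j l, J (i, k) (j, l) = (2 / ((p i : ℂ) + (p j : ℂ))) * ω (i, k) (j, l)) :
    jordan ((Matrix.diagonal fun i => (p i : ℂ)) ⊗ₖ (1 : Matrix B B ℂ)) J = ω ∧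
    J.IsHermitian ∧
    ∀ J' : Matrix (A × B) (A × B) ℂ,
      jordan ((Matrix.diagonal fun i => (p i : ℂ)) ⊗ₖ (1 : Matrix B B ℂ)) J' = ω → J' = J :=
  stmt0_general p hp ω hω J hJ
end

section
/- Let A and B be nonempty finite types, let ρ be a positive definite Hermitian complex matrix indexed by A, and let ω be any complex matrix indexed by A × B. Set R = ρ ⊗ₖ 1. Then the matrix-valued function t ↦ exp(−(t/2)·R) · ω · exp(−(t/2)·R) is integrable on the interval (0,∞), and the matrix J = ∫_{t ∈ (0,∞)} exp(−(t/2)·R) · ω · exp(−(t/2)·R) dt satisfies R ★ J = ω, i.e. (R·J + J·R)/2 = ω. -/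
open Matrix
open scoped Kronecker ComplexOrder

/-!
Diagonalise `R = U diag(d) U*` with `d > 0` and write `N = U* ω U`. In the eigenbasis the integrand
has entries `exp(-(dᵢ + dⱼ) t / 2) Nᵢⱼ`, so `J` has entries `Nᵢⱼ / ((dᵢ + dⱼ) / 2)`, while the Jordan
product with `R` multiplies the `(i, j)` entry by `(dᵢ + dⱼ) / 2`.
-/

open MeasureTheory NormedSpace

namespace Matrix

section Integral

variable {X l m n o : Type*} [Fintype m] [Fintype n] [MeasurableSpace X] {μ : Measure X}
  {s : Set X}

theorem integrableOn_mul_mul_apply (U : Matrix l m ℂ) (V : Matrix n o ℂ) {g : X → m → n → ℂ}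
    (hg : ∀ i j, IntegrableOn (fun x => g x i j) s μ) (p : l) (q : o) :
    IntegrableOn (fun x => (U * of (g x) * V) p q) s μ := by
  simp only [mul_apply]
  exact integrable_finsetSum _ fun j _ =>
    (integrable_finsetSum _ fun i _ => (hg i j).const_mul _).mul_const _

theorem integral_mul_mul_apply (U : Matrix l m ℂ) (V : Matrix n o ℂ) {g : X → m → n → ℂ}
    (hg : ∀ i j, IntegrableOn (fun x => g x i j) s μ) (p : l) (q : o) :
    ∫ x in s, (U * of (g x) * V) p q ∂μ = (U * of (fun i j => ∫ x in s, g x i j ∂μ) * V) p q := by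
  simp only [mul_apply, of_apply]
  rw [integral_finsetSum _ fun j _ =>
    (integrable_finsetSum _ fun i _ => (hg i j).const_mul _).mul_const _]
  refine Finset.sum_congr rfl fun j _ => ?_
  rw [integral_mul_const, integral_finsetSum _ fun i _ => (hg i j).const_mul _]
  simp only [integral_const_mul]

end Integral

theorem integral_cexp_neg_mul_Ioi {b : ℂ} (hb : 0 < b.re) :
    ∫ t : ℝ in Set.Ioi 0, Complex.exp (-b * t) = b⁻¹ := by
  rw [integral_exp_mul_complex_Ioi (by simpa using hb)]
  simp only [mul_zero, Complex.ofReal_zero, Complex.exp_zero]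
  ring

variable {n : Type*} [Fintype n] [DecidableEq n]

theorem diagonal_conj_mul_mul_diagonal_conj (U V ω : Matrix n n ℂ) (d e : n → ℂ) :
    U * diagonal d * V * ω * (U * diagonal e * V)
      = U * of (fun i j => d i * (V * ω * U) i j * e j) * V := by
  have hmid : diagonal d * (V * ω * U) * diagonal e
      = of fun i j => d i * (V * ω * U) i j * e j := by
    ext i j
    simp [diagonal_mul, mul_diagonal]
  rw [← hmid]
  simp only [Matrix.mul_assoc]

theorem jordan_diagonal_conj {U V : Matrix n n ℂ} (hVU : V * U = 1) (d : n → ℂ) (M : Matrix n n ℂ) :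
    jordan (U * diagonal d * V) (U * M * V) = U * of (fun i j => (d i + d j) / 2 * M i j) * V := by
  have hsum : diagonal d * M + M * diagonal d = of fun i j => (d i + d j) * M i j := by
    ext i j
    simp only [add_apply, diagonal_mul, mul_diagonal, of_apply]
    ring
  have hconj : U * diagonal d * V * (U * M * V) + U * M * V * (U * diagonal d * V)
      = U * (diagonal d * M + M * diagonal d) * V := by
    simp only [Matrix.mul_add, Matrix.add_mul, Matrix.mul_assoc]
    simp only [← Matrix.mul_assoc V U, hVU, Matrix.one_mul]
  rw [jordan, hconj, hsum, ← smul_mul_assoc, ← mul_smul_comm]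
  congr 2
  ext i j
  simp only [smul_apply, of_apply, smul_eq_mul]
  ring

theorem exp_unitary_conj_diagonal {U : Matrix n n ℂ} (hU : U ∈ unitary (Matrix n n ℂ))
    (d : n → ℂ) :
    exp (U * diagonal d * star U) = U * diagonal (fun i => Complex.exp (d i)) * star U := by
  have hinv : U⁻¹ = star U := inv_eq_right_inv (Unitary.mul_star_self_of_mem hU)
  have hunit : IsUnit U := ⟨⟨U, star U, Unitary.mul_star_self_of_mem hU,
    Unitary.star_mul_self_of_mem hU⟩, rfl⟩
  rw [← hinv, exp_conj U _ hunit, exp_diagonal]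
  congr 3
  funext i
  rw [Pi.coe_exp, ← Complex.exp_eq_exp_ℂ]

section Sandwich

variable {U : Matrix n n ℂ} {d : n → ℝ}

theorem exp_smul_unitary_conj_diagonal_sandwich (hU : U ∈ unitary (Matrix n n ℂ))
    (ω : Matrix n n ℂ) (t : ℝ) :
    exp ((-(t / 2) : ℝ) • (U * diagonal (fun i => (d i : ℂ)) * star U)) * ω
      * exp ((-(t / 2) : ℝ) • (U * diagonal (fun i => (d i : ℂ)) * star U))
      = U * of (fun i j => Complex.exp (-(((d i : ℂ) + d j) / 2) * t)
          * (star U * ω * U) i j) * star U := by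
  have hsmul : (-(t / 2) : ℝ) • (U * diagonal (fun i => (d i : ℂ)) * star U)
      = U * diagonal (fun i => ((-(t / 2) * d i : ℝ) : ℂ)) * star U := by
    rw [← smul_mul_assoc, ← mul_smul_comm, ← diagonal_smul]
    congr 3
    ext i
    simp [Complex.real_smul]
  rw [hsmul, exp_unitary_conj_diagonal hU, diagonal_conj_mul_mul_diagonal_conj]
  congr 2
  ext i j
  rw [of_apply, of_apply, mul_right_comm, ← Complex.exp_add]
  push_cast
  ring_nf

theorem integrableOn_exp_smul_unitary_conj_diagonal_sandwich (hU : U ∈ unitary (Matrix n n ℂ))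
    (hd : ∀ i, 0 < d i) (ω : Matrix n n ℂ) (p q : n) :
    IntegrableOn (fun t : ℝ =>
      (exp ((-(t / 2) : ℝ) • (U * diagonal (fun i => (d i : ℂ)) * star U)) * ω
        * exp ((-(t / 2) : ℝ) • (U * diagonal (fun i => (d i : ℂ)) * star U))) p q)
      (Set.Ioi 0) := by
  simp only [exp_smul_unitary_conj_diagonal_sandwich hU]
  refine integrableOn_mul_mul_apply _ _ (fun i j => ?_) p q
  refine (integrableOn_exp_mul_complex_Ioi ?_ 0).mul_const _
  simpa using add_pos (hd i) (hd j)

theorem jordan_integral_exp_smul_unitary_conj_diagonal_sandwich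
    (hU : U ∈ unitary (Matrix n n ℂ)) (hd : ∀ i, 0 < d i) (ω : Matrix n n ℂ) :
    jordan (U * diagonal (fun i => (d i : ℂ)) * star U) (of fun p q => ∫ t in Set.Ioi (0 : ℝ),
      (exp ((-(t / 2) : ℝ) • (U * diagonal (fun i => (d i : ℂ)) * star U)) * ω
        * exp ((-(t / 2) : ℝ) • (U * diagonal (fun i => (d i : ℂ)) * star U))) p q) = ω := by
  have hpos (i j : n) : 0 < (((d i : ℂ) + d j) / 2).re := by
    simpa using add_pos (hd i) (hd j)
  have hint (i j : n) : IntegrableOn (fun t : ℝ => Complex.exp (-(((d i : ℂ) + d j) / 2) * t)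
      * (star U * ω * U) i j) (Set.Ioi 0) :=
    (integrableOn_exp_mul_complex_Ioi (by simpa using hpos i j) 0).mul_const _
  have hJ : (of fun p q => ∫ t in Set.Ioi (0 : ℝ), (U * of (fun i j =>
      Complex.exp (-(((d i : ℂ) + d j) / 2) * t) * (star U * ω * U) i j) * star U) p q)
      = U * of (fun i j => (((d i : ℂ) + d j) / 2)⁻¹ * (star U * ω * U) i j) * star U := by
    ext p q
    rw [of_apply, integral_mul_mul_apply _ _ hint]
    simp only [integral_mul_const, integral_cexp_neg_mul_Ioi (hpos _ _)]
  have hcancel : (of fun i j => ((d i : ℂ) + d j) / 2 * of (fun i j =>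
      (((d i : ℂ) + d j) / 2)⁻¹ * (star U * ω * U) i j) i j) = star U * ω * U := by
    ext i j
    exact mul_inv_cancel_left₀ (ne_of_apply_ne Complex.re (hpos i j).ne') _
  simp only [exp_smul_unitary_conj_diagonal_sandwich hU]
  rw [hJ, jordan_diagonal_conj (Unitary.star_mul_self_of_mem hU), hcancel]
  simp only [← Matrix.mul_assoc, Unitary.mul_star_self_of_mem hU, Matrix.one_mul]
  simp only [Matrix.mul_assoc, Unitary.mul_star_self_of_mem hU, Matrix.mul_one]

end Sandwich

theorem PosDef.exists_unitary_conj_diagonal_pos {R : Matrix n n ℂ} (hR : R.PosDef) :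
    ∃ U ∈ unitary (Matrix n n ℂ), ∃ d : n → ℝ,
      (∀ i, 0 < d i) ∧ R = U * diagonal (fun i => (d i : ℂ)) * star U :=
  ⟨_, hR.1.eigenvectorUnitary.2, _, hR.eigenvalues_pos, hR.1.spectral_theorem⟩

end Matrix

open Matrix in
theorem stmt1_general {A B : Type*} [Fintype A] [Fintype B]
    [DecidableEq A] [DecidableEq B]
    (ρ : Matrix A A ℂ) (hρ : ρ.PosDef)
    (ω : Matrix (A × B) (A × B) ℂ) :
    (∀ p q : A × B,
      IntegrableOn
        (fun t : ℝ =>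
          (NormedSpace.exp ((-(t / 2) : ℝ) • (ρ ⊗ₖ (1 : Matrix B B ℂ))) * ω *
            NormedSpace.exp ((-(t / 2) : ℝ) • (ρ ⊗ₖ (1 : Matrix B B ℂ)))) p q)
        (Set.Ioi (0 : ℝ))) ∧
    jordan (ρ ⊗ₖ (1 : Matrix B B ℂ))
      (Matrix.of fun p q =>
        ∫ t in Set.Ioi (0 : ℝ),
          (NormedSpace.exp ((-(t / 2) : ℝ) • (ρ ⊗ₖ (1 : Matrix B B ℂ))) * ω *
            NormedSpace.exp ((-(t / 2) : ℝ) • (ρ ⊗ₖ (1 : Matrix B B ℂ)))) p q) = ω := by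
  obtain ⟨U, hU, d, hd, hR⟩ :=
    (hρ.kronecker (PosDef.one (n := B))).exists_unitary_conj_diagonal_pos
  rw [hR]
  exact ⟨integrableOn_exp_smul_unitary_conj_diagonal_sandwich hU hd ω,
    jordan_integral_exp_smul_unitary_conj_diagonal_sandwich hU hd ω⟩

open MeasureTheory in
theorem stmt1 {A B : Type*} [Fintype A] [Fintype B] [Nonempty A] [Nonempty B]
    [DecidableEq A] [DecidableEq B]
    (ρ : Matrix A A ℂ) (hρ : ρ.PosDef)
    (ω : Matrix (A × B) (A × B) ℂ) :
    (∀ p q : A × B,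
      IntegrableOn
        (fun t : ℝ =>
          (NormedSpace.exp ((-(t / 2) : ℝ) • (ρ ⊗ₖ (1 : Matrix B B ℂ))) * ω *
            NormedSpace.exp ((-(t / 2) : ℝ) • (ρ ⊗ₖ (1 : Matrix B B ℂ)))) p q)
        (Set.Ioi (0 : ℝ))) ∧
    jordan (ρ ⊗ₖ (1 : Matrix B B ℂ))
      (Matrix.of fun p q =>
        ∫ t in Set.Ioi (0 : ℝ),
          (NormedSpace.exp ((-(t / 2) : ℝ) • (ρ ⊗ₖ (1 : Matrix B B ℂ))) * ω *
            NormedSpace.exp ((-(t / 2) : ℝ) • (ρ ⊗ₖ (1 : Matrix B B ℂ)))) p q) = ω :=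
  stmt1_general ρ hρ ω
end

section
/- Let A be a nonempty finite type and let K be a complex matrix indexed by (A × A) × (A × A). Then the following are equivalent: (i) for every positive semidefinite complex matrix ρ indexed by A, Tr( ((ρ ⊗ₖ 1) ★ S) · K ) = 0; (ii) Tr_B( S ★ K ) = 0 (the zero A-indexed matrix). -/
open Matrix
open scoped Kronecker ComplexOrder

/-! Cyclicity of the trace moves the Jordan product from `ρ ⊗ 1` onto `K`, and the
partial trace from `S ★ K` onto `ρ`: condition (i) says `tr (ρ · Tr_B (S ★ K)) = 0` for every
`ρ ≥ 0`, and positive semidefinite matrices separate points under the trace pairing. -/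

lemma trace_jordan_mul {n : Type*} [Fintype n] (X Y Z : Matrix n n ℂ) :
    trace (jordan X Y * Z) = trace (X * jordan Y Z) := by
  simp only [jordan, Matrix.smul_mul, Matrix.mul_smul, Matrix.add_mul, Matrix.mul_add,
    trace_smul, trace_add]
  rw [← Matrix.mul_assoc X Y Z, ← Matrix.mul_assoc X Z Y,
    trace_mul_cycle Y X Z, trace_mul_cycle Z Y X]

lemma trace_kronecker_one_mul {A B : Type*} [Fintype A] [Fintype B] [DecidableEq B]
    (ρ : Matrix A A ℂ) (N : Matrix (A × B) (A × B) ℂ) :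
    trace ((ρ ⊗ₖ (1 : Matrix B B ℂ)) * N) = trace (ρ * trB N) := by
  simp only [trace, diag, mul_apply, trB, of_apply, kroneckerMap_apply, one_apply,
    Fintype.sum_prod_type, mul_ite, mul_one, mul_zero, ite_mul, zero_mul,
    Finset.sum_ite_eq, Finset.mem_univ, if_true, Finset.mul_sum]
  exact Finset.sum_congr rfl fun _ _ => Finset.sum_comm

lemma Matrix.eq_zero_of_forall_dotProduct_mulVec_self_eq_zero {n : Type*} [Fintype n]
    (M : Matrix n n ℂ) (h : ∀ v : n → ℂ, star v ⬝ᵥ M *ᵥ v = 0) : M = 0 := by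
  classical
  have hT : toLpLin 2 2 M = 0 := by
    refine (inner_map_self_eq_zero _).mp fun x => ?_
    rw [← inner_conj_symm, EuclideanSpace.inner_eq_star_dotProduct, dotProduct_comm,
      ofLp_toLpLin, toLin'_apply, h, map_zero]
  simpa using hT

-- Test against the rank-one projections `v vᴴ`, for which `tr (v vᴴ M) = vᴴ M v`.
lemma Matrix.eq_zero_of_forall_posSemidef_trace_mul_eq_zero {n : Type*} [Fintype n]
    (M : Matrix n n ℂ) (h : ∀ ρ : Matrix n n ℂ, ρ.PosSemidef → trace (ρ * M) = 0) :
    M = 0 := by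
  refine M.eq_zero_of_forall_dotProduct_mulVec_self_eq_zero fun v => ?_
  have hv := h _ (posSemidef_vecMulVec_self_star v)
  rwa [vecMulVec_mul, trace_vecMulVec, dotProduct_comm, ← dotProduct_mulVec] at hv

theorem stmt2_general {A : Type*} [Fintype A] [DecidableEq A]
    (K : Matrix (A × A) (A × A) ℂ) :
    (∀ ρ : Matrix A A ℂ, ρ.PosSemidef →
        Matrix.trace (jordan (ρ ⊗ₖ (1 : Matrix A A ℂ)) (swap A) * K) = 0) ↔
    trB (jordan (swap A) K) = 0 := by
  have htrace : ∀ ρ : Matrix A A ℂ,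
      trace (jordan (ρ ⊗ₖ (1 : Matrix A A ℂ)) (swap A) * K) =
        trace (ρ * trB (jordan (swap A) K)) := fun ρ => by
    rw [trace_jordan_mul, trace_kronecker_one_mul]
  simp only [htrace]
  refine ⟨eq_zero_of_forall_posSemidef_trace_mul_eq_zero _, fun h _ _ => ?_⟩
  rw [h, Matrix.mul_zero, trace_zero]

theorem stmt2 {A : Type*} [Fintype A] [Nonempty A] [DecidableEq A]
    (K : Matrix (A × A) (A × A) ℂ) :
    (∀ ρ : Matrix A A ℂ, ρ.PosSemidef →
        Matrix.trace (jordan (ρ ⊗ₖ (1 : Matrix A A ℂ)) (swap A) * K) = 0) ↔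
    trB (jordan (swap A) K) = 0 :=
  stmt2_general K
end

section
/- Let A and B be nonempty finite types and consider complex matrices indexed by A × B as a real inner product space with ⟪X, Y⟫ = Re Tr(X* · Y), where X* is the conjugate transpose. Let C₂ = { C : ∃ z : ℂ, Tr_B(C) = z • 1 }. Then the dual cone of C₂, namely { X : ∀ C ∈ C₂, Re Tr(X* · C) ≥ 0 }, equals { A' ⊗ₖ 1 : A' a complex matrix indexed by A with Tr(A') = 0 }. -/
open Matrix
open scoped Kronecker ComplexOrder

lemma trace_conjT_mul {n : Type*} [Fintype n] (X C : Matrix n n ℂ) :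
    Matrix.trace (Xᴴ * C) = ∑ p, ∑ q, (starRingEnd ℂ) (X q p) * C q p := by
  simp [Matrix.trace, Matrix.mul_apply, Matrix.diag, Matrix.conjTranspose_apply]

lemma trB_smul {A B : Type*} [Fintype B] (z : ℂ) (C : Matrix (A × B) (A × B) ℂ) :
    trB (z • C) = z • trB C := by
  ext a b; simp [trB, Finset.mul_sum]

lemma trB_neg {A B : Type*} [Fintype B] (C : Matrix (A × B) (A × B) ℂ) :
    trB (-C) = -(trB C) := by
  ext a b; simp [trB]

lemma trB_sub {A B : Type*} [Fintype B] (C D : Matrix (A × B) (A × B) ℂ) :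
    trB (C - D) = trB C - trB D := by
  ext a b; simp [trB, Finset.sum_sub_distrib]

lemma trB_std {A B : Type*} [Fintype B] [DecidableEq A] [DecidableEq B]
    (j i : A) (k : B) :
    trB (Matrix.single (j, k) (i, k) (1 : ℂ)) = Matrix.single j i 1 := by
  ext a b
  by_cases hja : j = a
  · by_cases hib : i = b
    · subst hja; subst hib
      simp [trB, Matrix.single, Prod.ext_iff, Finset.sum_ite_eq, Finset.sum_ite_eq']
      rw [Finset.filter_eq]; simp
    · simp [trB, Matrix.single, Prod.ext_iff, hib]
  · simp [trB, Matrix.single, Prod.ext_iff, hja]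

lemma trB_std0 {A B : Type*} [Fintype B] [DecidableEq A] [DecidableEq B]
    (j i : A) (l k : B) (h : l ≠ k) :
    trB (Matrix.single (j, l) (i, k) (1 : ℂ)) = 0 := by
  ext a b
  simp only [trB, Matrix.of_apply, Matrix.zero_apply]
  apply Finset.sum_eq_zero
  intro c _
  simp only [Matrix.single, Matrix.of_apply]
  rw [if_neg]
  rintro ⟨h1, h2⟩
  exact h ((congrArg Prod.snd h1).trans (congrArg Prod.snd h2).symm)

lemma trace_conjT_mul_std {n : Type*} [Fintype n] [DecidableEq n] (X : Matrix n n ℂ) (p q : n) :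
    Matrix.trace (Xᴴ * Matrix.single p q (1 : ℂ)) = (starRingEnd ℂ) (X p q) := by
  rw [trace_conjT_mul]
  simp [Matrix.single, ite_and, Finset.sum_ite_eq, Finset.sum_ite_eq', Finset.filter_eq']

lemma trB_one {A B : Type*} [Fintype A] [Fintype B] [DecidableEq A] [DecidableEq B] :
    trB (1 : Matrix (A × B) (A × B) ℂ) = (Fintype.card B : ℂ) • 1 := by
  ext a b
  simp [trB, Matrix.one_apply, Prod.ext_iff]

lemma key {A B : Type*} [Fintype A] [Fintype B] [DecidableEq B]
    (A' : Matrix A A ℂ) (C : Matrix (A × B) (A × B) ℂ) :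
    Matrix.trace ((A' ⊗ₖ (1 : Matrix B B ℂ))ᴴ * C) = Matrix.trace (A'ᴴ * trB C) := by
  rw [trace_conjT_mul, trace_conjT_mul]
  simp only [Fintype.sum_prod_type, Matrix.kroneckerMap_apply, Matrix.one_apply, trB,
    Matrix.of_apply, Finset.mul_sum, mul_ite, mul_one, mul_zero, apply_ite (starRingEnd ℂ),
    map_zero, ite_mul, zero_mul, Finset.sum_ite_eq', Finset.mem_univ, if_true]
  apply Finset.sum_congr rfl; intro x _
  exact Finset.sum_comm

theorem stmt4 {A B : Type*} [Fintype A] [Fintype B] [Nonempty A] [Nonempty B]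
    [DecidableEq A] [DecidableEq B] :
    { X : Matrix (A × B) (A × B) ℂ |
        ∀ C : Matrix (A × B) (A × B) ℂ, (∃ z : ℂ, trB C = z • (1 : Matrix A A ℂ)) →
          0 ≤ (Matrix.trace (Xᴴ * C)).re } =
    { X : Matrix (A × B) (A × B) ℂ |
        ∃ A' : Matrix A A ℂ, A'.trace = 0 ∧ X = A' ⊗ₖ (1 : Matrix B B ℂ) } := by
  ext X
  simp only [Set.mem_setOf_eq]
  constructor
  · intro hX
    -- strengthen to equality with zero
    have hz : ∀ C : Matrix (A × B) (A × B) ℂ, (∃ z : ℂ, trB C = z • (1 : Matrix A A ℂ)) →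
        Matrix.trace (Xᴴ * C) = 0 := by
      intro C hC
      obtain ⟨z, hzC⟩ := hC
      have h1 := hX C ⟨z, hzC⟩
      have h2 := hX (-C) ⟨-z, by rw [trB_neg, hzC, neg_smul]⟩
      have h3 := hX (Complex.I • C) ⟨Complex.I * z, by rw [trB_smul, hzC, smul_smul]⟩
      have h4 := hX ((-Complex.I) • C) ⟨-Complex.I * z, by rw [trB_smul, hzC, smul_smul]⟩
      rw [show Xᴴ * (-C) = -(Xᴴ * C) from by noncomm_ring, Matrix.trace_neg] at h2
      rw [Matrix.mul_smul, Matrix.trace_smul] at h3 h4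
      simp only [Complex.neg_re, neg_nonneg] at h2
      simp only [smul_eq_mul, Complex.mul_re, Complex.I_re, Complex.I_im, Complex.neg_re,
        Complex.neg_im, zero_mul, one_mul, zero_sub, neg_neg, neg_mul, neg_zero] at h3 h4
      apply Complex.ext
      · exact le_antisymm h2 h1
      · simp only [Complex.zero_im]
        linarith
    have h0 : ∀ C : Matrix (A × B) (A × B) ℂ, trB C = 0 →
        Matrix.trace (Xᴴ * C) = 0 := fun C h => hz C ⟨0, by rw [h, zero_smul]⟩
    obtain ⟨b0⟩ := (inferInstance : Nonempty B)
    refine ⟨Matrix.of fun j i => X (j, b0) (i, b0), ?_, ?_⟩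
    · -- trace zero
      have h1 := hz 1 ⟨(Fintype.card B : ℂ), trB_one⟩
      rw [mul_one, Matrix.trace_conjTranspose] at h1
      have htr : Matrix.trace X = 0 := by
        have := congrArg star h1
        simpa using this
      have hdiag : ∀ (i : A) (k : B), X (i, k) (i, k) = X (i, b0) (i, b0) := by
        intro i k
        by_cases hk : k = b0
        · rw [hk]
        · have hc := h0 (Matrix.single (i, k) (i, k) 1
              - Matrix.single (i, b0) (i, b0) 1)
            (by rw [trB_sub, trB_std, trB_std, sub_self])
          rw [Matrix.mul_sub, Matrix.trace_sub, trace_conjT_mul_std, trace_conjT_mul_std,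
            sub_eq_zero] at hc
          exact (starRingEnd ℂ).injective hc
      have heq : Matrix.trace X = (Fintype.card B : ℂ) *
          Matrix.trace (Matrix.of fun j i => X (j, b0) (i, b0) : Matrix A A ℂ) := by
        rw [Matrix.trace, Matrix.trace]
        simp only [Matrix.diag_apply, Matrix.of_apply, Fintype.sum_prod_type, Finset.mul_sum]
        apply Finset.sum_congr rfl
        intro i _
        calc ∑ k : B, X (i, k) (i, k) = ∑ _k : B, X (i, b0) (i, b0) :=
              Finset.sum_congr rfl fun k _ => hdiag i k
          _ = (Fintype.card B : ℂ) * X (i, b0) (i, b0) := by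
              rw [Finset.sum_const, nsmul_eq_mul, Finset.card_univ]
      rw [htr] at heq
      have hcard : (Fintype.card B : ℂ) ≠ 0 := by
        simpa using Fintype.card_ne_zero (α := B)
      exact (mul_eq_zero.mp heq.symm).resolve_left hcard
    · -- X = A' ⊗ₖ 1
      ext ⟨j, l⟩ ⟨i, k⟩
      simp only [Matrix.kroneckerMap_apply, Matrix.one_apply, Matrix.of_apply]
      by_cases hlk : l = k
      · subst hlk
        rw [if_pos rfl, mul_one]
        by_cases hl : l = b0
        · rw [hl]
        · have hc := h0 (Matrix.single (j, l) (i, l) 1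
              - Matrix.single (j, b0) (i, b0) 1)
            (by rw [trB_sub, trB_std, trB_std, sub_self])
          rw [Matrix.mul_sub, Matrix.trace_sub, trace_conjT_mul_std, trace_conjT_mul_std,
            sub_eq_zero] at hc
          exact (starRingEnd ℂ).injective hc
      · rw [if_neg hlk, mul_zero]
        have hc := h0 (Matrix.single (j, l) (i, k) 1) (trB_std0 j i l k hlk)
        rw [trace_conjT_mul_std] at hc
        simpa using (starRingEnd ℂ).injective (by simpa using hc)
  · rintro ⟨A', htr, rfl⟩ C ⟨z, hC⟩
    rw [key, hC]
    rw [show A'ᴴ * (z • (1 : Matrix A A ℂ)) = z • A'ᴴ from by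
      rw [Matrix.mul_smul, mul_one]]
    rw [Matrix.trace_smul, Matrix.trace_conjTranspose, htr]
    simp
end

section
/- Let A, B, C be nonempty finite types and let K_AB, K_BC, K_AC be Hermitian cost matrices indexed by (A×B)×(A×B), (B×C)×(B×C), (A×C)×(A×C) respectively. Let Q₃ be the set of three-time states over time, i.e. all matrices (ρ ⊗ₖ 1_{B×C}) ★ ( (J_AB ⊗ₖ 1_C) ★ (1_A ⊗ₖ J_BC) ) indexed by A×B×C, where ρ ranges over states on A, J_AB over Jamiołkowski matrices from A to B, and J_BC over Jamiołkowski matrices from B to C (the placements ⊗ₖ 1 refer to the obvious index identifications of A×B×C). Define K' = K_AB ⊗ 1_C + 1_A ⊗ K_BC − K_AC ⊗ 1_B, where K_AC ⊗ 1_B denotes the matrix on A×B×C acting as K_AC on the A and C factors and as the identity on B. If Re Tr(K'·Q) ≥ 0 for all Q ∈ Q₃, then for all states ρ on A, σ on B and τ on C: 𝒦_{K_AC}(ρ, τ) ≤ 𝒦_{K_AB}(ρ, σ) + 𝒦_{K_BC}(σ, τ). -/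
open Matrix
open scoped Kronecker ComplexOrder

/-- Embedding of a matrix on `A × B` into `A × (B × C)`, acting as the identity on `C`. -/
def embAB {A B C : Type*} [DecidableEq C] (M : Matrix (A × B) (A × B) ℂ) :
    Matrix (A × B × C) (A × B × C) ℂ :=
  Matrix.of fun p q => M (p.1, p.2.1) (q.1, q.2.1) * (if p.2.2 = q.2.2 then 1 else 0)

/-- Embedding of a matrix on `A × C` into `A × (B × C)`, acting as the identity on `B`. -/
def embAC {A B C : Type*} [DecidableEq B] (M : Matrix (A × C) (A × C) ℂ) :
    Matrix (A × B × C) (A × B × C) ℂ :=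
  Matrix.of fun p q => M (p.1, p.2.2) (q.1, q.2.2) * (if p.2.1 = q.2.1 then 1 else 0)

/-!
Given plans `J₁` from `ρ` to `σ` and `J₂` from `σ` to `τ`, their composite `jamComp J₁ J₂` is a
plan from `ρ` to `τ`. The three-time state `Q` built from `ρ, J₁, J₂` has the two-time marginals
`(ρ ⊗ 1) ★ J₁` on `A × B`, `(σ ⊗ 1) ★ J₂` on `B × C` and `(ρ ⊗ 1) ★ jamComp J₁ J₂` on `A × C`,
so `0 ≤ Re Tr (K' Q)` says exactly that the composite plan costs at most the sum of the costs of
`J₁` and `J₂`. Taking infima gives the triangle inequality: the cost sets are nonempty (witnessed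
by the product plan `1 ⊗ σ`) and bounded below (plans have entries bounded by `|A|`).
-/

section PartialTrace

variable {A B : Type*}

lemma trA_add [Fintype A] (X Y : Matrix (A × B) (A × B) ℂ) : trA (X + Y) = trA X + trA Y := by
  ext; simp [trA, Finset.sum_add_distrib]

lemma trA_smul [Fintype A] (c : ℂ) (X : Matrix (A × B) (A × B) ℂ) : trA (c • X) = c • trA X := by
  ext; simp [trA, Finset.mul_sum]

lemma trace_one_kronecker_mul [Fintype A] [Fintype B] [DecidableEq A] (K : Matrix B B ℂ)
    (Q : Matrix (A × B) (A × B) ℂ) :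
    ((1 : Matrix A A ℂ) ⊗ₖ K * Q).trace = (K * trA Q).trace := by
  simp only [trace, diag_apply, mul_apply, kroneckerMap_apply, one_apply, ite_mul, one_mul,
    zero_mul, Fintype.sum_prod_type, Finset.sum_ite_irrel, Finset.sum_const_zero,
    Finset.sum_ite_eq, Finset.mem_univ, ↓reduceIte, trA, of_apply, Finset.mul_sum]
  rw [Finset.sum_comm]
  exact Finset.sum_congr rfl fun _ _ => Finset.sum_comm

lemma trA_mul_one_kronecker [Fintype A] [Fintype B] [DecidableEq A]
    (Y : Matrix (A × B) (A × B) ℂ) (Z : Matrix B B ℂ) :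
    trA (Y * (1 : Matrix A A ℂ) ⊗ₖ Z) = trA Y * Z := by
  ext k l
  simp only [trA, mul_apply, kroneckerMap_apply, one_apply, ite_mul, one_mul, zero_mul, mul_ite,
    mul_zero, Fintype.sum_prod_type, Finset.sum_ite_irrel, Finset.sum_const_zero,
    Finset.sum_ite_eq', Finset.mem_univ, ↓reduceIte, of_apply, Finset.sum_mul]
  exact Finset.sum_comm

lemma trA_one_kronecker_mul [Fintype A] [Fintype B] [DecidableEq A]
    (Y : Matrix (A × B) (A × B) ℂ) (Z : Matrix B B ℂ) :
    trA ((1 : Matrix A A ℂ) ⊗ₖ Z * Y) = Z * trA Y := by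
  ext k l
  simp only [trA, mul_apply, kroneckerMap_apply, one_apply, ite_mul, one_mul, zero_mul,
    Fintype.sum_prod_type, Finset.sum_ite_irrel, Finset.sum_const_zero, Finset.sum_ite_eq,
    Finset.mem_univ, ↓reduceIte, of_apply, Finset.mul_sum]
  exact Finset.sum_comm

lemma trA_kronecker_one_mul_comm [Fintype A] [Fintype B] [DecidableEq B] (ρ : Matrix A A ℂ)
    (Y : Matrix (A × B) (A × B) ℂ) :
    trA (ρ ⊗ₖ (1 : Matrix B B ℂ) * Y) = trA (Y * ρ ⊗ₖ (1 : Matrix B B ℂ)) := by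
  ext k l
  simp only [trA, mul_apply, kroneckerMap_apply, one_apply, mul_ite, mul_one, mul_zero, ite_mul,
    zero_mul, Fintype.sum_prod_type, Finset.sum_ite_eq, Finset.mem_univ, ↓reduceIte, of_apply,
    Finset.sum_ite_eq']
  rw [Finset.sum_comm]
  exact Finset.sum_congr rfl fun _ _ => Finset.sum_congr rfl fun _ _ => mul_comm _ _

lemma trA_jordan_kronecker_one [Fintype A] [Fintype B] [DecidableEq B] (ρ : Matrix A A ℂ)
    (Y : Matrix (A × B) (A × B) ℂ) :
    trA (jordan (ρ ⊗ₖ (1 : Matrix B B ℂ)) Y) = trA (ρ ⊗ₖ (1 : Matrix B B ℂ) * Y) := by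
  rw [jordan, trA_smul, trA_add, ← trA_kronecker_one_mul_comm, ← two_smul ℂ, smul_smul]
  norm_num

end PartialTrace

lemma jordan_one_right {n : Type*} [Fintype n] [DecidableEq n] (X : Matrix n n ℂ) :
    jordan X 1 = X := by
  rw [jordan, mul_one, one_mul, ← two_smul ℂ X, smul_smul]
  norm_num

lemma Matrix.PosSemidef.norm_apply_le_trace {n : Type*} [Fintype n] {P : Matrix n n ℂ}
    (hP : P.PosSemidef) (i j : n) : ‖P i j‖ ≤ P.trace.re := by
  have hdiag : ∀ k, 0 ≤ (P k k).re ∧ (P k k).im = 0 := fun k => by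
    obtain ⟨hre, him⟩ := Complex.nonneg_iff.mp (hP.diag_nonneg (i := k))
    exact ⟨hre, him.symm⟩
  have hle : ∀ k, (P k k).re ≤ P.trace.re := fun k => by
    rw [trace, Complex.re_sum]
    exact Finset.single_le_sum (f := fun l => (P l l).re) (fun l _ => (hdiag l).1)
      (Finset.mem_univ k)
  -- the `2 × 2` principal minor on `i, j` is nonnegative: `‖P i j‖ ^ 2 ≤ P i i * P j j`
  have hminor := (hP.submatrix ![i, j]).det_nonneg
  rw [det_fin_two] at hminor
  simp only [Nat.succ_eq_add_one, Nat.reduceAdd, Fin.isValue, submatrix_apply, cons_val_zero,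
    cons_val_one, cons_val_fin_one, sub_nonneg] at hminor
  rw [(hP.isHermitian.apply j i).symm, Complex.star_def, Complex.mul_conj,
    Complex.normSq_eq_norm_sq, Complex.le_def] at hminor
  simp only [Complex.ofReal_re, Complex.mul_re, (hdiag i).2, (hdiag j).2, mul_zero, sub_zero,
    Complex.ofReal_im, Complex.mul_im, zero_mul, add_zero, and_true] at hminor
  nlinarith [hdiag i, hdiag j, hle i, hle j, norm_nonneg (P i j)]

section ThreeParty

variable {A B C : Type*}

lemma embAB_mul [Fintype A] [Fintype B] [Fintype C] [DecidableEq C]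
    (M N : Matrix (A × B) (A × B) ℂ) :
    embAB (C := C) (M * N) = embAB (C := C) M * embAB (C := C) N := by
  ext ⟨a, b, c⟩ ⟨a', b', c'⟩
  simp [embAB, mul_apply, Fintype.sum_prod_type]

lemma embAB_kronecker_one [DecidableEq B] [DecidableEq C] (ρ : Matrix A A ℂ) :
    embAB (C := C) (ρ ⊗ₖ (1 : Matrix B B ℂ)) = ρ ⊗ₖ (1 : Matrix (B × C) (B × C) ℂ) := by
  ext ⟨a, b, c⟩ ⟨a', b', c'⟩
  simp [embAB, one_apply, ← ite_and, and_comm]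

lemma embAC_kronecker_one [DecidableEq B] [DecidableEq C] (ρ : Matrix A A ℂ) :
    embAC (B := B) (ρ ⊗ₖ (1 : Matrix C C ℂ)) = ρ ⊗ₖ (1 : Matrix (B × C) (B × C) ℂ) := by
  ext ⟨a, b, c⟩ ⟨a', b', c'⟩
  simp [embAC, one_apply, ← ite_and]

lemma trA_embAB [Fintype A] [DecidableEq C] (M : Matrix (A × B) (A × B) ℂ) :
    trA (embAB (C := C) M) = trA M ⊗ₖ (1 : Matrix C C ℂ) := by
  ext ⟨b, c⟩ ⟨b', c'⟩
  simp [trA, embAB, one_apply]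

noncomputable def trC [Fintype C] (Q : Matrix (A × B × C) (A × B × C) ℂ) :
    Matrix (A × B) (A × B) ℂ :=
  Matrix.of fun p q => ∑ c, Q (p.1, p.2, c) (q.1, q.2, c)

noncomputable def trMid [Fintype B] (Q : Matrix (A × B × C) (A × B × C) ℂ) :
    Matrix (A × C) (A × C) ℂ :=
  Matrix.of fun p q => ∑ b, Q (p.1, b, p.2) (q.1, b, q.2)

lemma trC_add [Fintype C] (X Y : Matrix (A × B × C) (A × B × C) ℂ) :
    trC (X + Y) = trC X + trC Y := by
  ext; simp [trC, Finset.sum_add_distrib]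

lemma trC_smul [Fintype C] (c : ℂ) (X : Matrix (A × B × C) (A × B × C) ℂ) :
    trC (c • X) = c • trC X := by
  ext; simp [trC, Finset.mul_sum]

lemma trMid_add [Fintype B] (X Y : Matrix (A × B × C) (A × B × C) ℂ) :
    trMid (X + Y) = trMid X + trMid Y := by
  ext; simp [trMid, Finset.sum_add_distrib]

lemma trMid_smul [Fintype B] (c : ℂ) (X : Matrix (A × B × C) (A × B × C) ℂ) :
    trMid (c • X) = c • trMid X := by
  ext; simp [trMid, Finset.mul_sum]

lemma trace_embAB_mul [Fintype A] [Fintype B] [Fintype C] [DecidableEq C]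
    (K : Matrix (A × B) (A × B) ℂ) (Q : Matrix (A × B × C) (A × B × C) ℂ) :
    (embAB K * Q).trace = (K * trC Q).trace := by
  simp only [trace, embAB, mul_ite, mul_one, mul_zero, diag_apply, mul_apply, of_apply, ite_mul,
    zero_mul, Fintype.sum_prod_type, Finset.sum_ite_eq, Finset.mem_univ, ↓reduceIte, trC,
    Finset.mul_sum]
  exact Finset.sum_congr rfl fun _ _ => Finset.sum_congr rfl fun _ _ => Finset.sum_comm_cycle.symm

lemma trace_embAC_mul [Fintype A] [Fintype B] [Fintype C] [DecidableEq B]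
    (K : Matrix (A × C) (A × C) ℂ) (Q : Matrix (A × B × C) (A × B × C) ℂ) :
    (embAC K * Q).trace = (K * trMid Q).trace := by
  simp only [trace, embAC, mul_ite, mul_one, mul_zero, diag_apply, mul_apply, of_apply, ite_mul,
    zero_mul, Fintype.sum_prod_type, Finset.sum_ite_irrel, Finset.sum_const_zero,
    Finset.sum_ite_eq, Finset.mem_univ, ↓reduceIte, trMid, Finset.mul_sum]
  refine Finset.sum_congr rfl fun _ _ => ?_
  rw [Finset.sum_comm]
  exact Finset.sum_congr rfl fun _ _ => Finset.sum_comm_cycle.symm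

lemma trC_embAB_mul [Fintype A] [Fintype B] [Fintype C] [DecidableEq C]
    (M : Matrix (A × B) (A × B) ℂ) (Q : Matrix (A × B × C) (A × B × C) ℂ) :
    trC (embAB M * Q) = M * trC Q := by
  ext ⟨a, b⟩ ⟨a', b'⟩
  simp only [trC, embAB, mul_ite, mul_one, mul_zero, mul_apply, of_apply, Prod.mk.eta, ite_mul,
    zero_mul, Fintype.sum_prod_type, Finset.sum_ite_eq, Finset.mem_univ, ↓reduceIte,
    Finset.mul_sum]
  exact Finset.sum_comm_cycle.symm

lemma trC_mul_embAB [Fintype A] [Fintype B] [Fintype C] [DecidableEq C]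
    (M : Matrix (A × B) (A × B) ℂ) (Q : Matrix (A × B × C) (A × B × C) ℂ) :
    trC (Q * embAB M) = trC Q * M := by
  ext ⟨a, b⟩ ⟨a', b'⟩
  simp only [trC, embAB, mul_ite, mul_one, mul_zero, mul_apply, of_apply, Prod.mk.eta,
    Fintype.sum_prod_type, Finset.sum_ite_eq', Finset.mem_univ, ↓reduceIte, Finset.sum_mul]
  exact Finset.sum_comm_cycle.symm

lemma trMid_embAC_mul [Fintype A] [Fintype B] [Fintype C] [DecidableEq B]
    (M : Matrix (A × C) (A × C) ℂ) (Q : Matrix (A × B × C) (A × B × C) ℂ) :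
    trMid (embAC M * Q) = M * trMid Q := by
  ext ⟨a, c⟩ ⟨a', c'⟩
  simp only [trMid, embAC, mul_ite, mul_one, mul_zero, mul_apply, of_apply, Prod.mk.eta, ite_mul,
    zero_mul, Fintype.sum_prod_type, Finset.sum_ite_irrel, Finset.sum_const_zero,
    Finset.sum_ite_eq, Finset.mem_univ, ↓reduceIte, Finset.mul_sum]
  exact Finset.sum_comm_cycle.symm

lemma trMid_mul_embAC [Fintype A] [Fintype B] [Fintype C] [DecidableEq B]
    (M : Matrix (A × C) (A × C) ℂ) (Q : Matrix (A × B × C) (A × B × C) ℂ) :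
    trMid (Q * embAC M) = trMid Q * M := by
  ext ⟨a, c⟩ ⟨a', c'⟩
  simp only [trMid, embAC, mul_ite, mul_one, mul_zero, mul_apply, of_apply, Prod.mk.eta,
    Fintype.sum_prod_type, Finset.sum_ite_irrel, Finset.sum_const_zero, Finset.sum_ite_eq',
    Finset.mem_univ, ↓reduceIte, Finset.sum_mul]
  exact Finset.sum_comm_cycle.symm

lemma trC_jordan_embAB [Fintype A] [Fintype B] [Fintype C] [DecidableEq C]
    (M : Matrix (A × B) (A × B) ℂ) (Q : Matrix (A × B × C) (A × B × C) ℂ) :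
    trC (jordan (embAB M) Q) = jordan M (trC Q) := by
  rw [jordan, jordan, trC_smul, trC_add, trC_embAB_mul, trC_mul_embAB]

lemma trMid_jordan_embAC [Fintype A] [Fintype B] [Fintype C] [DecidableEq B]
    (M : Matrix (A × C) (A × C) ℂ) (Q : Matrix (A × B × C) (A × B × C) ℂ) :
    trMid (jordan (embAC M) Q) = jordan M (trMid Q) := by
  rw [jordan, jordan, trMid_smul, trMid_add, trMid_embAC_mul, trMid_mul_embAC]

lemma trC_one_kronecker [Fintype C] [DecidableEq A] (J : Matrix (B × C) (B × C) ℂ) :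
    trC ((1 : Matrix A A ℂ) ⊗ₖ J) = (1 : Matrix A A ℂ) ⊗ₖ trB J := by
  ext ⟨a, b⟩ ⟨a', b'⟩
  simp [trC, trB, Finset.mul_sum]

lemma trA_trMid [Fintype A] [Fintype B] (Q : Matrix (A × B × C) (A × B × C) ℂ) :
    trA (trMid Q) = trA (trA Q) := by
  ext c c'
  simp only [trA, trMid, of_apply]
  exact Finset.sum_comm

lemma trB_trMid [Fintype B] [Fintype C] (Q : Matrix (A × B × C) (A × B × C) ℂ) :
    trB (trMid Q) = trB (trC Q) := by
  ext a a'
  simp only [trB, trMid, of_apply, trC]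
  exact Finset.sum_comm

end ThreeParty

section Composition

variable {A B C : Type*}

-- The Jamiołkowski matrix of the composite of the channels with Jamiołkowski matrices `J₁`, `J₂`.
noncomputable def jamComp [Fintype B] (J₁ : Matrix (A × B) (A × B) ℂ)
    (J₂ : Matrix (B × C) (B × C) ℂ) : Matrix (A × C) (A × C) ℂ :=
  Matrix.of fun p q => ∑ b, ∑ b', J₁ (p.1, b) (q.1, b') * J₂ (b', p.2) (b, q.2)

lemma trMid_embAB_mul_one_kronecker [Fintype A] [Fintype B] [Fintype C]
    [DecidableEq A] [DecidableEq C]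
    (J₁ : Matrix (A × B) (A × B) ℂ) (J₂ : Matrix (B × C) (B × C) ℂ) :
    trMid (embAB J₁ * (1 : Matrix A A ℂ) ⊗ₖ J₂) = jamComp J₁ J₂ := by
  ext ⟨a, c⟩ ⟨a', c'⟩
  simp [trMid, jamComp, embAB, mul_apply, one_apply, Fintype.sum_prod_type]

lemma trMid_one_kronecker_mul_embAB [Fintype A] [Fintype B] [Fintype C]
    [DecidableEq A] [DecidableEq C]
    (J₁ : Matrix (A × B) (A × B) ℂ) (J₂ : Matrix (B × C) (B × C) ℂ) :
    trMid ((1 : Matrix A A ℂ) ⊗ₖ J₂ * embAB J₁) = jamComp J₁ J₂ := by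
  ext ⟨a, c⟩ ⟨a', c'⟩
  simp only [trMid, embAB, mul_ite, mul_one, mul_zero, mul_apply, kroneckerMap_apply, one_apply,
    ite_mul, one_mul, zero_mul, of_apply, Fintype.sum_prod_type, Finset.sum_ite_eq',
    Finset.mem_univ, ↓reduceIte, Finset.sum_ite_irrel, Finset.sum_const_zero, Finset.sum_ite_eq,
    jamComp]
  rw [Finset.sum_comm]
  exact Finset.sum_congr rfl fun _ _ => Finset.sum_congr rfl fun _ _ => mul_comm _ _

lemma trMid_jordan_embAB_one_kronecker [Fintype A] [Fintype B] [Fintype C]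
    [DecidableEq A] [DecidableEq C]
    (J₁ : Matrix (A × B) (A × B) ℂ) (J₂ : Matrix (B × C) (B × C) ℂ) :
    trMid (jordan (embAB J₁) ((1 : Matrix A A ℂ) ⊗ₖ J₂)) = jamComp J₁ J₂ := by
  rw [jordan, trMid_smul, trMid_add, trMid_embAB_mul_one_kronecker,
    trMid_one_kronecker_mul_embAB, ← two_smul ℂ, smul_smul]
  norm_num

lemma posSemidef_ptA_jamComp [Fintype A] [Fintype B] [Fintype C]
    {J₁ : Matrix (A × B) (A × B) ℂ} {J₂ : Matrix (B × C) (B × C) ℂ}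
    (h₁ : (ptA J₁).PosSemidef) (h₂ : (ptA J₂).PosSemidef) : (ptA (jamComp J₁ J₂)).PosSemidef := by
  classical
  -- `V` sends `(a, c)` to `∑ b, (a, b) ⊗ (b, c)`
  let V : Matrix ((A × B) × (B × C)) (A × C) ℂ :=
    of fun p q => if p.1.1 = q.1 ∧ p.1.2 = p.2.1 ∧ p.2.2 = q.2 then 1 else 0
  have hV : ptA (jamComp J₁ J₂) = Vᴴ * (ptA J₁ ⊗ₖ ptA J₂) * V := by
    ext ⟨a, c⟩ ⟨a', c'⟩
    simp only [ptA, jamComp, of_apply, ite_and, mul_apply, conjTranspose_apply, RCLike.star_def,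
      apply_ite (starRingEnd ℂ), map_one, map_zero, kroneckerMap_apply, ite_mul, one_mul, zero_mul,
      Fintype.sum_prod_type, Finset.sum_ite_irrel, Finset.sum_ite_eq', Finset.mem_univ, ↓reduceIte,
      Finset.sum_const_zero, Finset.sum_ite_eq, mul_ite, mul_one, mul_zero, V]
    exact Finset.sum_comm
  rw [hV]
  exact (h₁.kronecker h₂).conjTranspose_mul_mul_same V

lemma trB_jamComp [Fintype A] [Fintype B] [Fintype C] [DecidableEq A] [DecidableEq B]
    [DecidableEq C]
    {J₁ : Matrix (A × B) (A × B) ℂ} {J₂ : Matrix (B × C) (B × C) ℂ}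
    (hJ₁ : trB J₁ = 1) (hJ₂ : trB J₂ = 1) : trB (jamComp J₁ J₂) = 1 := by
  rw [← trMid_embAB_mul_one_kronecker, trB_trMid, trC_embAB_mul, trC_one_kronecker, hJ₂,
    one_kronecker_one, mul_one, hJ₁]

lemma isJam_jamComp [Fintype A] [Fintype B] [Fintype C] [DecidableEq A] [DecidableEq B]
    [DecidableEq C]
    {J₁ : Matrix (A × B) (A × B) ℂ} {J₂ : Matrix (B × C) (B × C) ℂ}
    (hJ₁ : IsJam J₁) (hJ₂ : IsJam J₂) : IsJam (jamComp J₁ J₂) :=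
  ⟨posSemidef_ptA_jamComp hJ₁.1 hJ₂.1, trB_jamComp hJ₁.2 hJ₂.2⟩

lemma trA_kronecker_one_mul_embAB_mul [Fintype A] [Fintype B] [Fintype C]
    [DecidableEq A] [DecidableEq B] [DecidableEq C]
    (ρ : Matrix A A ℂ) (J₁ : Matrix (A × B) (A × B) ℂ) (J₂ : Matrix (B × C) (B × C) ℂ) :
    trA (ρ ⊗ₖ (1 : Matrix (B × C) (B × C) ℂ) * (embAB J₁ * (1 : Matrix A A ℂ) ⊗ₖ J₂)) =
      trA (ρ ⊗ₖ (1 : Matrix B B ℂ) * J₁) ⊗ₖ (1 : Matrix C C ℂ) * J₂ := by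
  rw [← mul_assoc, ← embAB_kronecker_one, ← embAB_mul, trA_mul_one_kronecker, trA_embAB]

lemma trA_kronecker_one_mul_jamComp [Fintype A] [Fintype B] [Fintype C]
    [DecidableEq A] [DecidableEq B] [DecidableEq C]
    {ρ : Matrix A A ℂ} {σ : Matrix B B ℂ} {τ : Matrix C C ℂ}
    {J₁ : Matrix (A × B) (A × B) ℂ} {J₂ : Matrix (B × C) (B × C) ℂ}
    (hσ : trA (ρ ⊗ₖ (1 : Matrix B B ℂ) * J₁) = σ) (hτ : trA (σ ⊗ₖ (1 : Matrix C C ℂ) * J₂) = τ) :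
    trA (ρ ⊗ₖ (1 : Matrix C C ℂ) * jamComp J₁ J₂) = τ := by
  rw [← trMid_embAB_mul_one_kronecker, ← trMid_embAC_mul, embAC_kronecker_one, trA_trMid,
    trA_kronecker_one_mul_embAB_mul, hσ, hτ]

end Composition

section ThreeTimeState

variable {A B C : Type*} [Fintype A] [Fintype B] [Fintype C]
  [DecidableEq A] [DecidableEq B] [DecidableEq C]

noncomputable def threeTimeState (ρ : Matrix A A ℂ) (J₁ : Matrix (A × B) (A × B) ℂ)
    (J₂ : Matrix (B × C) (B × C) ℂ) : Matrix (A × B × C) (A × B × C) ℂ :=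
  jordan (ρ ⊗ₖ (1 : Matrix (B × C) (B × C) ℂ)) (jordan (embAB J₁) ((1 : Matrix A A ℂ) ⊗ₖ J₂))

lemma trC_threeTimeState (ρ : Matrix A A ℂ) (J₁ : Matrix (A × B) (A × B) ℂ)
    {J₂ : Matrix (B × C) (B × C) ℂ} (hJ₂ : trB J₂ = 1) :
    trC (threeTimeState ρ J₁ J₂) = jordan (ρ ⊗ₖ (1 : Matrix B B ℂ)) J₁ := by
  rw [threeTimeState, ← embAB_kronecker_one, trC_jordan_embAB, trC_jordan_embAB,
    trC_one_kronecker, hJ₂, one_kronecker_one, jordan_one_right]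

lemma trA_threeTimeState {ρ : Matrix A A ℂ} {J₁ : Matrix (A × B) (A × B) ℂ} {σ : Matrix B B ℂ}
    (hσ : trA (ρ ⊗ₖ (1 : Matrix B B ℂ) * J₁) = σ) (J₂ : Matrix (B × C) (B × C) ℂ) :
    trA (threeTimeState ρ J₁ J₂) = jordan (σ ⊗ₖ (1 : Matrix C C ℂ)) J₂ := by
  have hcomm : ρ ⊗ₖ (1 : Matrix (B × C) (B × C) ℂ) * (1 : Matrix A A ℂ) ⊗ₖ J₂ =
      (1 : Matrix A A ℂ) ⊗ₖ J₂ * ρ ⊗ₖ (1 : Matrix (B × C) (B × C) ℂ) := by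
    simp only [← mul_kronecker_mul, mul_one, one_mul]
  have hρJ₁ : trA (ρ ⊗ₖ (1 : Matrix (B × C) (B × C) ℂ) * embAB J₁) = σ ⊗ₖ (1 : Matrix C C ℂ) := by
    rw [← embAB_kronecker_one, ← embAB_mul, trA_embAB, hσ]
  rw [threeTimeState, trA_jordan_kronecker_one, jordan, mul_smul_comm, mul_add, trA_smul, trA_add,
    trA_kronecker_one_mul_embAB_mul, hσ, ← mul_assoc, hcomm, mul_assoc, trA_one_kronecker_mul,
    hρJ₁, jordan]

lemma trMid_threeTimeState (ρ : Matrix A A ℂ) (J₁ : Matrix (A × B) (A × B) ℂ)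
    (J₂ : Matrix (B × C) (B × C) ℂ) :
    trMid (threeTimeState ρ J₁ J₂) = jordan (ρ ⊗ₖ (1 : Matrix C C ℂ)) (jamComp J₁ J₂) := by
  rw [threeTimeState, ← embAC_kronecker_one, trMid_jordan_embAC, trMid_jordan_embAB_one_kronecker]

end ThreeTimeState

section Cost

variable {A B : Type*} [Fintype A] [Fintype B]

noncomputable def planCost [DecidableEq B] (K : Matrix (A × B) (A × B) ℂ) (ρ : Matrix A A ℂ)
    (J : Matrix (A × B) (A × B) ℂ) : ℝ :=
  (K * jordan (ρ ⊗ₖ (1 : Matrix B B ℂ)) J).trace.re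

-- `cost K ρ σ` is definitionally `sInf (costSet K ρ σ)`.
def costSet [DecidableEq A] [DecidableEq B] (K : Matrix (A × B) (A × B) ℂ) (ρ : Matrix A A ℂ)
    (σ : Matrix B B ℂ) : Set ℝ :=
  { r | ∃ J, IsJam J ∧ trA (ρ ⊗ₖ (1 : Matrix B B ℂ) * J) = σ ∧ r = planCost K ρ J }

lemma IsJam.norm_apply_le [DecidableEq A] {J : Matrix (A × B) (A × B) ℂ} (hJ : IsJam J)
    (p q : A × B) :
    ‖J p q‖ ≤ Fintype.card A := by
  have htr : (ptA J).trace = Fintype.card A := by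
    rw [← trace_one (n := A) (R := ℂ), ← hJ.2]
    simp [trace, ptA, trB, Fintype.sum_prod_type]
  have h := hJ.1.norm_apply_le_trace (q.1, p.2) (p.1, q.2)
  rw [htr] at h
  simpa [ptA] using h

lemma costSet_bddBelow [DecidableEq A] [DecidableEq B] (K : Matrix (A × B) (A × B) ℂ)
    (ρ : Matrix A A ℂ) (σ : Matrix B B ℂ) : BddBelow (costSet K ρ σ) := by
  let S : Set (Matrix (A × B) (A × B) ℂ) :=
    Set.univ.pi fun _ => Set.univ.pi fun _ => Metric.closedBall 0 (Fintype.card A)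
  have hS : IsCompact S :=
    isCompact_univ_pi fun _ => isCompact_univ_pi fun _ => isCompact_closedBall _ _
  have hcont : Continuous (planCost K ρ) := by
    unfold planCost jordan
    fun_prop
  refine (hS.bddBelow_image hcont.continuousOn).mono ?_
  rintro _ ⟨J, hJ, -, rfl⟩
  exact ⟨J, fun p _ q _ => by simpa using hJ.norm_apply_le p q, rfl⟩

lemma isJam_one_kronecker [DecidableEq A] {σ : Matrix B B ℂ} (hσ : IsState σ) :
    IsJam ((1 : Matrix A A ℂ) ⊗ₖ σ) := by
  refine ⟨?_, ?_⟩
  · have hpt : ptA ((1 : Matrix A A ℂ) ⊗ₖ σ) = (1 : Matrix A A ℂ) ⊗ₖ σ := by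
      ext ⟨a, b⟩ ⟨a', b'⟩
      simp [ptA, one_apply, eq_comm]
    rw [hpt]
    exact PosSemidef.one.kronecker hσ.1
  · have htr : ∑ b, σ b b = 1 := hσ.2
    ext a a'
    simp [trB, one_apply, htr]

lemma costSet_nonempty [DecidableEq A] [DecidableEq B] (K : Matrix (A × B) (A × B) ℂ)
    {ρ : Matrix A A ℂ} {σ : Matrix B B ℂ} (hρ : IsState ρ) (hσ : IsState σ) :
    (costSet K ρ σ).Nonempty := by
  refine ⟨_, (1 : Matrix A A ℂ) ⊗ₖ σ, isJam_one_kronecker hσ, ?_, rfl⟩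
  have htr : ∑ a, ρ a a = 1 := hρ.2
  ext b b'
  simp [← mul_kronecker_mul, trA, ← Finset.sum_mul, htr]

end Cost

lemma csInf_le_csInf_add_csInf {S T U : Set ℝ} (hS : S.Nonempty) (hT : T.Nonempty)
    (hU : BddBelow U) (h : ∀ a ∈ S, ∀ b ∈ T, ∃ c ∈ U, c ≤ a + b) :
    sInf U ≤ sInf S + sInf T := by
  have hS' : ∀ b ∈ T, sInf U - b ≤ sInf S := fun b hb => le_csInf hS fun a ha => by
    obtain ⟨c, hc, hle⟩ := h a ha b hb
    linarith [csInf_le hU hc]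
  have hT' : sInf U - sInf S ≤ sInf T := le_csInf hT fun b hb => by linarith [hS' b hb]
  linarith

lemma planCost_jamComp_le {A B C : Type*} [Fintype A] [Fintype B] [Fintype C]
    [DecidableEq A] [DecidableEq B] [DecidableEq C]
    (K_AB : Matrix (A × B) (A × B) ℂ) (K_BC : Matrix (B × C) (B × C) ℂ)
    (K_AC : Matrix (A × C) (A × C) ℂ) {ρ : Matrix A A ℂ} {σ : Matrix B B ℂ}
    {J₁ : Matrix (A × B) (A × B) ℂ} {J₂ : Matrix (B × C) (B × C) ℂ}
    (hσ : trA (ρ ⊗ₖ (1 : Matrix B B ℂ) * J₁) = σ) (hJ₂ : trB J₂ = 1)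
    (h : 0 ≤ ((embAB K_AB + (1 : Matrix A A ℂ) ⊗ₖ K_BC - embAC K_AC) *
      threeTimeState ρ J₁ J₂).trace.re) :
    planCost K_AC ρ (jamComp J₁ J₂) ≤ planCost K_AB ρ J₁ + planCost K_BC σ J₂ := by
  rw [sub_mul, add_mul, trace_sub, trace_add, trace_embAB_mul, trace_one_kronecker_mul,
    trace_embAC_mul, trC_threeTimeState ρ J₁ hJ₂, trA_threeTimeState hσ, trMid_threeTimeState,
    Complex.sub_re, Complex.add_re] at h
  unfold planCost
  linarith

theorem stmt11_general {A B C : Type*} [Fintype A] [Fintype B] [Fintype C]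
    [DecidableEq A] [DecidableEq B] [DecidableEq C]
    (K_AB : Matrix (A × B) (A × B) ℂ)
    (K_BC : Matrix (B × C) (B × C) ℂ)
    (K_AC : Matrix (A × C) (A × C) ℂ)
    (hpos : ∀ (ρ : Matrix A A ℂ) (J_AB : Matrix (A × B) (A × B) ℂ)
        (J_BC : Matrix (B × C) (B × C) ℂ),
        IsState ρ → IsJam J_AB → IsJam J_BC →
        0 ≤ (Matrix.trace
          ((embAB (C := C) K_AB + (1 : Matrix A A ℂ) ⊗ₖ K_BC - embAC (B := B) K_AC) *
            jordan (ρ ⊗ₖ (1 : Matrix (B × C) (B × C) ℂ))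
              (jordan (embAB J_AB) ((1 : Matrix A A ℂ) ⊗ₖ J_BC)))).re) :
    ∀ (ρ : Matrix A A ℂ) (σ : Matrix B B ℂ) (τ : Matrix C C ℂ),
      IsState ρ → IsState σ → IsState τ →
      cost K_AC ρ τ ≤ cost K_AB ρ σ + cost K_BC σ τ := by
  intro ρ σ τ hρ hσ hτ
  refine csInf_le_csInf_add_csInf (costSet_nonempty K_AB hρ hσ) (costSet_nonempty K_BC hσ hτ)
    (costSet_bddBelow K_AC ρ τ) ?_
  rintro _ ⟨J₁, hJ₁, hσ₁, rfl⟩ _ ⟨J₂, hJ₂, hτ₂, rfl⟩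
  exact ⟨_, ⟨jamComp J₁ J₂, isJam_jamComp hJ₁ hJ₂, trA_kronecker_one_mul_jamComp hσ₁ hτ₂, rfl⟩,
    planCost_jamComp_le K_AB K_BC K_AC hσ₁ hJ₂.2 (hpos ρ J₁ J₂ hρ hJ₁ hJ₂)⟩

theorem stmt11 {A B C : Type*} [Fintype A] [Fintype B] [Fintype C]
    [Nonempty A] [Nonempty B] [Nonempty C]
    [DecidableEq A] [DecidableEq B] [DecidableEq C]
    (K_AB : Matrix (A × B) (A × B) ℂ) (hKAB : K_AB.IsHermitian)
    (K_BC : Matrix (B × C) (B × C) ℂ) (hKBC : K_BC.IsHermitian)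
    (K_AC : Matrix (A × C) (A × C) ℂ) (hKAC : K_AC.IsHermitian)
    (hpos : ∀ (ρ : Matrix A A ℂ) (J_AB : Matrix (A × B) (A × B) ℂ)
        (J_BC : Matrix (B × C) (B × C) ℂ),
        IsState ρ → IsJam J_AB → IsJam J_BC →
        0 ≤ (Matrix.trace
          ((embAB (C := C) K_AB + (1 : Matrix A A ℂ) ⊗ₖ K_BC - embAC (B := B) K_AC) *
            jordan (ρ ⊗ₖ (1 : Matrix (B × C) (B × C) ℂ))
              (jordan (embAB J_AB) ((1 : Matrix A A ℂ) ⊗ₖ J_BC)))).re) :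
    ∀ (ρ : Matrix A A ℂ) (σ : Matrix B B ℂ) (τ : Matrix C C ℂ),
      IsState ρ → IsState σ → IsState τ →
      cost K_AC ρ τ ≤ cost K_AB ρ σ + cost K_BC σ τ :=
  stmt11_general K_AB K_BC K_AC hpos
end

section
/- Let A be a nonempty finite type of cardinality d, let ρ be a state on A, let ι be a finite type, and let E : ι → Matrix A A ℂ be a family of Kraus operators with Σ_k (E k)* · (E k) = 1. Let J = Σ_k (1 ⊗ₖ E k) · S · (1 ⊗ₖ (E k)*) be the Jamiołkowski matrix of the associated channel. Then Tr( (1 − (1/d) • S) · ((ρ ⊗ₖ 1) ★ J) ) = 1 − (1/d) · Σ_k Re( Tr((E k)*) · Tr((E k) · ρ) ), as complex numbers (the left-hand side is real). -/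
open Matrix
open scoped Kronecker ComplexOrder

/-! With S the swap, S (X ⊗ Y) = (Y ⊗ X) S turns each summand of J into S (E ⊗ E*). Using S² = 1
and Tr (S (X ⊗ Y)) = Tr (X Y), every trace in the expansion of the Jordan product becomes a
product of traces on A: the unswapped term is Tr ((∑ E* E) ρ) = Tr ρ = 1, and the two swapped
terms are Tr E* · Tr (E ρ) and, since ρ is Hermitian, its complex conjugate. -/

section Swap

variable {A : Type*} [Fintype A] [DecidableEq A]

theorem swap_mul_kronecker (X Y : Matrix A A ℂ) :
    swap A * (X ⊗ₖ Y) = (Y ⊗ₖ X) * swap A := by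
  ext ⟨i, k⟩ ⟨j, l⟩
  simp [mul_apply, _root_.swap, Fintype.sum_prod_type, ite_and, mul_comm]

theorem swap_mul_swap : swap A * swap A = 1 := by
  ext ⟨i, k⟩ ⟨j, l⟩
  simp [mul_apply, _root_.swap, Fintype.sum_prod_type, ite_and, one_apply, Prod.ext_iff]

theorem trace_swap_mul_kronecker (X Y : Matrix A A ℂ) :
    trace (swap A * (X ⊗ₖ Y)) = trace (X * Y) := by
  simp only [trace, diag_apply, mul_apply, _root_.swap, of_apply, kroneckerMap_apply,
    Fintype.sum_prod_type, ite_and, ite_mul, one_mul, zero_mul, Finset.sum_ite_eq,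
    Finset.mem_univ, ↓reduceIte]
  exact Finset.sum_comm

theorem one_kronecker_mul_swap_mul_one_kronecker (X Y : Matrix A A ℂ) :
    (1 ⊗ₖ X) * swap A * (1 ⊗ₖ Y) = swap A * (X ⊗ₖ Y) := by
  rw [← swap_mul_kronecker, Matrix.mul_assoc, ← mul_kronecker_mul, Matrix.mul_one,
    Matrix.one_mul]

theorem trace_kronecker_one_mul_swap_mul_kronecker (X E F : Matrix A A ℂ) :
    trace ((X ⊗ₖ 1) * (swap A * (E ⊗ₖ F))) = trace (F * E * X) := by
  rw [trace_mul_comm, Matrix.mul_assoc, ← mul_kronecker_mul, Matrix.mul_one,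
    trace_swap_mul_kronecker, trace_mul_comm, Matrix.mul_assoc]

theorem trace_swap_mul_kronecker_one_mul_swap_mul_kronecker (X E F : Matrix A A ℂ) :
    trace (swap A * (X ⊗ₖ 1) * (swap A * (E ⊗ₖ F))) = trace E * trace (X * F) := by
  rw [swap_mul_kronecker, Matrix.mul_assoc, ← Matrix.mul_assoc (swap A), swap_mul_swap,
    Matrix.one_mul, ← mul_kronecker_mul, Matrix.one_mul, trace_kronecker]

theorem trace_swap_mul_swap_mul_kronecker_mul_kronecker_one (X E F : Matrix A A ℂ) :
    trace (swap A * (swap A * (E ⊗ₖ F) * (X ⊗ₖ 1))) = trace F * trace (E * X) := by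
  rw [← Matrix.mul_assoc, ← Matrix.mul_assoc, swap_mul_swap, Matrix.one_mul,
    ← mul_kronecker_mul, Matrix.mul_one, trace_kronecker, mul_comm]

end Swap

theorem trace_one_sub_smul_mul_jordan {n : Type*} [Fintype n] [DecidableEq n] (c : ℝ)
    (S X Y : Matrix n n ℂ) :
    trace ((1 - c • S) * jordan X Y) =
      trace (X * Y) - c * (2⁻¹ * (trace (S * X * Y) + trace (S * (Y * X)))) := by
  simp only [jordan, Matrix.sub_mul, Matrix.one_mul, smul_mul_assoc, Matrix.mul_smul,
    Matrix.mul_add, trace_sub, trace_smul, trace_add, trace_mul_comm Y X,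
    Matrix.mul_assoc, smul_eq_mul, Complex.real_smul]
  ring

theorem trace_mul_trace_mul_conjTranspose {n : Type*} [Fintype n] {ρ : Matrix n n ℂ}
    (hρ : ρ.IsHermitian) (E : Matrix n n ℂ) :
    trace E * trace (ρ * Eᴴ) = star (trace Eᴴ * trace (E * ρ)) := by
  rw [star_mul', ← trace_conjTranspose, ← trace_conjTranspose, conjTranspose_conjTranspose,
    conjTranspose_mul, hρ.eq]

theorem inv_two_mul_star_add_self (z : ℂ) : 2⁻¹ * (star z + z) = (z.re : ℂ) := by
  rw [add_comm, Complex.star_def, Complex.add_conj]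
  push_cast
  ring

theorem stmt15_general {A ι : Type*} [Fintype A] [DecidableEq A] [Fintype ι]
    (ρ : Matrix A A ℂ) (hρ : IsState ρ)
    (E : ι → Matrix A A ℂ) (hE : ∑ k, (E k)ᴴ * E k = 1) :
    Matrix.trace
        ((1 - ((1 : ℝ) / (Fintype.card A : ℝ)) • swap A) *
          jordan (ρ ⊗ₖ (1 : Matrix A A ℂ))
            (∑ k, ((1 : Matrix A A ℂ) ⊗ₖ E k) * swap A * ((1 : Matrix A A ℂ) ⊗ₖ (E k)ᴴ))) =
      (((1 : ℝ) - (1 / (Fintype.card A : ℝ)) *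
          ∑ k, (Matrix.trace ((E k)ᴴ) * Matrix.trace (E k * ρ)).re : ℝ) : ℂ) := by
  simp only [one_kronecker_mul_swap_mul_one_kronecker, trace_one_sub_smul_mul_jordan,
    Matrix.mul_sum, Matrix.sum_mul, trace_sum, trace_kronecker_one_mul_swap_mul_kronecker,
    trace_swap_mul_kronecker_one_mul_swap_mul_kronecker,
    trace_swap_mul_swap_mul_kronecker_mul_kronecker_one]
  rw [← trace_sum, ← Finset.sum_mul, hE, Matrix.one_mul, hρ.2, ← Finset.sum_add_distrib,
    Finset.mul_sum]
  simp only [trace_mul_trace_mul_conjTranspose hρ.1.isHermitian, inv_two_mul_star_add_self]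
  push_cast
  ring

theorem stmt15 {A ι : Type*} [Fintype A] [Nonempty A] [DecidableEq A] [Fintype ι]
    (ρ : Matrix A A ℂ) (hρ : IsState ρ)
    (E : ι → Matrix A A ℂ) (hE : ∑ k, (E k)ᴴ * E k = 1) :
    Matrix.trace
        ((1 - ((1 : ℝ) / (Fintype.card A : ℝ)) • swap A) *
          jordan (ρ ⊗ₖ (1 : Matrix A A ℂ))
            (∑ k, ((1 : Matrix A A ℂ) ⊗ₖ E k) * swap A * ((1 : Matrix A A ℂ) ⊗ₖ (E k)ᴴ))) =
      (((1 : ℝ) - (1 / (Fintype.card A : ℝ)) *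
          ∑ k, (Matrix.trace ((E k)ᴴ) * Matrix.trace (E k * ρ)).re : ℝ) : ℂ) :=
  stmt15_general ρ hρ E hE
end

section
/- Let d ≥ 2 be a natural number and work with complex matrices indexed by Fin d. Let α ∈ ℝ with 0 ≤ α ≤ 1, let ρ = |e₀⟩⟨e₀| be the rank-one projection onto the first standard basis vector, and let σ = |φ⟩⟨φ| with φ = α·e₀ + √(1−α²)·e₁. Then sInf { Re Tr( (d • 1 − S) · ((ρ ⊗ₖ 1) ★ J) ) : J a Jamiołkowski matrix from Fin d to Fin d with Tr_A((ρ ⊗ₖ 1)·J) = σ } = (1 − α)·(d + 2α). -/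
open Matrix
open scoped Kronecker ComplexOrder

/-!
For Hermitian `K, X, Y` one has `Re Tr(K (X ★ Y)) = Re Tr(K X Y)`, so with `P = ρ ⊗ 1` the
objective is `d Tr(P J) - Re Tr(S P J) = d - Re ∑ᵢ J (0,i) (i,0)`. Write the positive matrix
`T_A(J)` as the Gram matrix of vectors `b (i,k)`. Then `Tr_B J = 1` says the rows
`(b (i,k))ₖ` are orthonormal, and `Tr_A(P J) = σ` says the Gram matrix of `b (0,·)` is
`|φ⟩⟨φ|`, so `b (0,0) = α u`, `b (0,1) = √(1-α²) u` for a unit vector `u` and `b (0,k) = 0`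
otherwise. The objective sums `Re ⟪b (i,i), b (0,0)⟫`, which is `α²` for `i = 0` and at most `α`
for `i ≥ 2`; for `i = 1`, orthogonality of rows `0` and `1` forces `|⟪u, b (1,1)⟫| ≤ α`. Hence
the cost is at least `d - 2α² - (d-2)α = (1-α)(d+2α)`. Equality holds for the Jamiołkowski matrix
of the unitary that rotates `e₀` to `φ` in the plane of `e₀, e₁` and fixes the other basis vectors.
-/

open scoped InnerProductSpace

section PartialTranspose

variable {A B : Type*}

@[simp] lemma ptA_ptA (M : Matrix (A × B) (A × B) ℂ) : ptA (ptA M) = M := rfl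

lemma conjTranspose_ptA (M : Matrix (A × B) (A × B) ℂ) : (ptA M)ᴴ = ptA Mᴴ := rfl

lemma Matrix.IsHermitian.of_ptA {J : Matrix (A × B) (A × B) ℂ} (h : (ptA J).IsHermitian) :
    J.IsHermitian := by
  simpa [IsHermitian, conjTranspose_ptA] using congrArg ptA h

end PartialTranspose

lemma isHermitian_swap {A : Type*} [DecidableEq A] : (swap A).IsHermitian := by
  ext p q
  simp [_root_.swap, and_comm, eq_comm]

section Trace

variable {A B : Type*} [Fintype A] [Fintype B]

lemma trace_trA (M : Matrix (A × B) (A × B) ℂ) : trace (trA M) = trace M := by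
  simp only [trace, diag, trA, of_apply, Fintype.sum_prod_type]
  exact Finset.sum_comm

lemma trace_swap_mul [DecidableEq A] (M : Matrix (A × A) (A × A) ℂ) :
    trace (swap A * M) = ∑ p : A × A, M (p.2, p.1) p := by
  simp [trace, mul_apply, _root_.swap, ite_and, Fintype.sum_prod_type, eq_comm]

lemma re_trace_mul_jordan {n : Type*} [Fintype n] {K X Y : Matrix n n ℂ} (hK : K.IsHermitian)
    (hX : X.IsHermitian) (hY : Y.IsHermitian) :
    (trace (K * jordan X Y)).re = (trace (K * X * Y)).re := by
  have : trace (K * (Y * X)) = star (trace (K * X * Y)) := by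
    rw [← trace_conjTranspose, conjTranspose_mul, conjTranspose_mul, hK.eq, hX.eq, hY.eq,
      trace_mul_comm, Matrix.mul_assoc]
  simp [jordan, mul_add, trace_add, this, Matrix.mul_assoc]
  ring

end Trace

section Projector

variable {A B : Type*} [Fintype A] [DecidableEq A] [Fintype B] [DecidableEq B]

lemma kronecker_single_one_mul_apply (z : A) (J : Matrix (A × B) (A × B) ℂ) (p q : A × B) :
    ((single z z (1 : ℂ) ⊗ₖ (1 : Matrix B B ℂ)) * J) p q = if p.1 = z then J (z, p.2) q else 0 := by
  simp [mul_apply, single_apply, one_apply, Fintype.sum_prod_type, ite_and, eq_comm]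

lemma trA_kronecker_single_one_mul (z : A) (J : Matrix (A × B) (A × B) ℂ) :
    trA ((single z z (1 : ℂ) ⊗ₖ (1 : Matrix B B ℂ)) * J) = J.submatrix (Prod.mk z) (Prod.mk z) := by
  ext k l
  simp [trA, kronecker_single_one_mul_apply]

end Projector

lemma re_trace_cost {A : Type*} [Fintype A] [DecidableEq A] (n : ℕ) (z : A)
    {J : Matrix (A × A) (A × A) ℂ} (hJ : J.IsHermitian) :
    (trace ((n • (1 : Matrix (A × A) (A × A) ℂ) - swap A) *
        jordan (single z z (1 : ℂ) ⊗ₖ (1 : Matrix A A ℂ)) J)).re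
      = n * (trace (J.submatrix (Prod.mk z) (Prod.mk z))).re - (∑ i, J (z, i) (i, z)).re := by
  have hP : (single z z (1 : ℂ) ⊗ₖ (1 : Matrix A A ℂ)).IsHermitian := by
    simp [IsHermitian, conjTranspose_kronecker]
  have hK : (n • (1 : Matrix (A × A) (A × A) ℂ) - swap A).IsHermitian :=
    (isHermitian_one.smul (IsSelfAdjoint.all n)).sub isHermitian_swap
  rw [re_trace_mul_jordan hK hP hJ, Matrix.mul_assoc, Matrix.sub_mul, trace_sub, smul_mul,
    Matrix.one_mul, trace_smul, ← trace_trA, trA_kronecker_single_one_mul, trace_swap_mul]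
  simp [kronecker_single_one_mul_apply, Fintype.sum_prod_type]

open scoped MatrixOrder in
lemma Matrix.PosSemidef.exists_eq_gram {n : Type*} [Fintype n] {L : Matrix n n ℂ}
    (hL : L.PosSemidef) : ∃ b : n → EuclideanSpace ℂ n, L = gram ℂ b := by
  classical
  obtain ⟨B, rfl⟩ := CStarAlgebra.nonneg_iff_eq_star_mul_self.mp hL.nonneg
  refine ⟨fun p => WithLp.toLp 2 fun r => B r p, ?_⟩
  ext p q
  simp [gram_apply, PiLp.inner_apply, mul_apply, mul_comm]

section InnerProduct

variable {𝕜 E : Type*} [RCLike 𝕜] [NormedAddCommGroup E] [InnerProductSpace 𝕜 E]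

open ComplexConjugate in
lemma smul_eq_smul_of_inner_eq_mul_conj {ι : Type*} {v : ι → E} {φ : ι → 𝕜}
    (h : ∀ k l, ⟪v k, v l⟫_𝕜 = φ k * conj (φ l)) (k l : ι) :
    conj (φ l) • v k = conj (φ k) • v l := by
  rw [← sub_eq_zero, ← inner_self_eq_zero (𝕜 := 𝕜)]
  simp only [inner_sub_left, inner_sub_right, inner_smul_left, inner_smul_right, h,
    RCLike.conj_conj]
  ring

end InnerProduct

section InnerProductComplex

variable {E : Type*} [NormedAddCommGroup E] [InnerProductSpace ℂ E]

lemma norm_inner_le_sq_of_inner_add_inner_eq_zero {α β : ℝ} (hα : 0 ≤ α)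
    (hαβ : α ^ 2 + β ^ 2 = 1) {x y u v : E} (hx : ‖x‖ = α) (hxy : (β : ℂ) • x = (α : ℂ) • y)
    (horth : ⟪x, u⟫_ℂ + ⟪y, v⟫_ℂ = 0) (huv : ‖u‖ ^ 2 + ‖v‖ ^ 2 ≤ 1) :
    ‖⟪x, v⟫_ℂ‖ ≤ α ^ 2 := by
  have hQP : (α : ℂ) * ⟪x, u⟫_ℂ = -((β : ℂ) * ⟪x, v⟫_ℂ) := by
    calc (α : ℂ) * ⟪x, u⟫_ℂ = -((α : ℂ) * ⟪y, v⟫_ℂ) := by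
          rw [eq_neg_of_add_eq_zero_left horth]; ring
      _ = -⟪(α : ℂ) • y, v⟫_ℂ := by rw [inner_smul_left, Complex.conj_ofReal]
      _ = -((β : ℂ) * ⟪x, v⟫_ℂ) := by rw [← hxy, inner_smul_left, Complex.conj_ofReal]
  have hnorm : α * ‖⟪x, u⟫_ℂ‖ = |β| * ‖⟪x, v⟫_ℂ‖ := by
    simpa [abs_of_nonneg hα] using congrArg norm hQP
  have hP : ‖⟪x, v⟫_ℂ‖ ≤ α * ‖v‖ := hx ▸ norm_inner_le_norm x v
  have hQ : ‖⟪x, u⟫_ℂ‖ ≤ α * ‖u‖ := hx ▸ norm_inner_le_norm x u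
  have hsq : ‖⟪x, v⟫_ℂ‖ ^ 2 ≤ (α ^ 2) ^ 2 :=
    calc ‖⟪x, v⟫_ℂ‖ ^ 2 = α ^ 2 * ‖⟪x, v⟫_ℂ‖ ^ 2 + (α * ‖⟪x, u⟫_ℂ‖) ^ 2 := by
          rw [hnorm, mul_pow, sq_abs]; linear_combination (-‖⟪x, v⟫_ℂ‖ ^ 2) * hαβ
      _ ≤ α ^ 2 * (α * ‖v‖) ^ 2 + (α * (α * ‖u‖)) ^ 2 := by gcongr
      _ = (α ^ 2) ^ 2 * (‖u‖ ^ 2 + ‖v‖ ^ 2) := by ring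
      _ ≤ (α ^ 2) ^ 2 := mul_le_of_le_one_right (by positivity) huv
  exact (pow_le_pow_iff_left₀ (norm_nonneg _) (by positivity) two_ne_zero).mp hsq

end InnerProductComplex

section LowerBound

variable {A E : Type*} [Fintype A] [DecidableEq A] [NormedAddCommGroup E] [InnerProductSpace ℂ E]

lemma sum_norm_sq_eq_one {b : A × A → E}
    (hrows : ∀ i j, ∑ k, ⟪b (i, k), b (j, k)⟫_ℂ = (1 : Matrix A A ℂ) i j) (i : A) :
    ∑ k, ‖b (i, k)‖ ^ 2 = 1 := by
  have h := congrArg Complex.re (hrows i i)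
  rw [Complex.re_sum, one_apply_eq, Complex.one_re] at h
  simpa only [← RCLike.re_to_complex, inner_self_eq_norm_sq] using h

lemma re_sum_inner_diag_le {z o : A} (hzo : z ≠ o) {α β : ℝ} (hα : 0 ≤ α)
    (hαβ : α ^ 2 + β ^ 2 = 1) {φ : A → ℂ} (hφ : φ = Pi.single z (α : ℂ) + Pi.single o (β : ℂ))
    {b : A × A → E} (hrows : ∀ i j, ∑ k, ⟪b (i, k), b (j, k)⟫_ℂ = (1 : Matrix A A ℂ) i j)
    (hblock : ∀ k l, ⟪b (z, k), b (z, l)⟫_ℂ = φ k * starRingEnd ℂ (φ l)) :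
    (∑ i, ⟪b (i, i), b (z, z)⟫_ℂ).re ≤ 2 * α ^ 2 + (Fintype.card A - 2) * α := by
  have hzz : ⟪b (z, z), b (z, z)⟫_ℂ = (α ^ 2 : ℝ) := by
    rw [hblock, hφ]; simp [hzo, sq]
  have hnorm_zz : ‖b (z, z)‖ = α := by
    rw [← sq_eq_sq₀ (norm_nonneg _) hα, ← Complex.ofReal_inj, ← hzz, inner_self_eq_norm_sq_to_K]
    norm_cast
  have hrel : (β : ℂ) • b (z, z) = (α : ℂ) • b (z, o) := by
    simpa [hφ, hzo, hzo.symm] using smul_eq_smul_of_inner_eq_mul_conj hblock z o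
  have hvanish : ∀ k, k ≠ z → k ≠ o → b (z, k) = 0 := fun k hkz hko =>
    inner_self_eq_zero.mp (by rw [hblock, hφ]; simp [hkz, hko])
  have horth : ⟪b (z, z), b (o, z)⟫_ℂ + ⟪b (z, o), b (o, o)⟫_ℂ = 0 := by
    rw [← Fintype.sum_eq_add (f := fun k => ⟪b (z, k), b (o, k)⟫_ℂ) z o hzo
      fun k ⟨hkz, hko⟩ => by simp [hvanish k hkz hko], hrows, one_apply_ne hzo]
  have hrow_o : ‖b (o, z)‖ ^ 2 + ‖b (o, o)‖ ^ 2 ≤ 1 := by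
    rw [← sum_norm_sq_eq_one hrows o, ← Finset.sum_pair (f := fun k => ‖b (o, k)‖ ^ 2) hzo]
    exact Finset.sum_le_univ_sum_of_nonneg fun _ => sq_nonneg _
  have hle_one : ∀ i, ‖b (i, i)‖ ≤ 1 := fun i => by
    rw [← sq_le_one_iff₀ (norm_nonneg _), ← sum_norm_sq_eq_one hrows i]
    exact Finset.single_le_sum (f := fun k => ‖b (i, k)‖ ^ 2) (fun _ _ => sq_nonneg _)
      (Finset.mem_univ i)
  have hbound : ∀ i, (⟪b (i, i), b (z, z)⟫_ℂ).re
      ≤ α + (Pi.single z (α ^ 2 - α) : A → ℝ) i + (Pi.single o (α ^ 2 - α) : A → ℝ) i := by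
    intro i
    by_cases hiz : i = z
    · subst hiz; rw [hzz, Complex.ofReal_re]; simp [hzo]
    by_cases hio : i = o
    · subst hio
      have := norm_inner_le_sq_of_inner_add_inner_eq_zero hα hαβ hnorm_zz hrel horth hrow_o
      rw [← inner_conj_symm, Complex.norm_conj] at this
      simpa [hzo.symm] using (Complex.re_le_norm _).trans this
    · calc (⟪b (i, i), b (z, z)⟫_ℂ).re ≤ ‖b (i, i)‖ * ‖b (z, z)‖ :=
          (Complex.re_le_norm _).trans (norm_inner_le_norm _ _)
        _ ≤ 1 * α := by rw [hnorm_zz]; gcongr; exact hle_one i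
        _ = _ := by simp [hiz, hio]
  calc (∑ i, ⟪b (i, i), b (z, z)⟫_ℂ).re
      ≤ ∑ i, (α + (Pi.single z (α ^ 2 - α) : A → ℝ) i + (Pi.single o (α ^ 2 - α) : A → ℝ) i) := by
        rw [Complex.re_sum]; exact Finset.sum_le_sum fun i _ => hbound i
    _ = 2 * α ^ 2 + (Fintype.card A - 2) * α := by
        simp [Finset.sum_add_distrib]; ring

end LowerBound

section UpperBound

variable {A : Type*}

def jamOfUnitary (V : Matrix A A ℂ) : Matrix (A × A) (A × A) ℂ :=
  ptA (vecMulVec (vec V) (star (vec V)))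

lemma jamOfUnitary_apply (V : Matrix A A ℂ) (p q : A × A) :
    jamOfUnitary V p q = V p.2 q.1 * star (V q.2 p.1) := rfl

variable [Fintype A]

lemma sum_jamOfUnitary_apply (V : Matrix A A ℂ) (z : A) :
    ∑ i, jamOfUnitary V (z, i) (i, z) = trace V * star (V z z) := by
  simp [jamOfUnitary_apply, trace, Finset.sum_mul]

variable [DecidableEq A]

lemma isJam_jamOfUnitary {V : Matrix A A ℂ} (hV : V ∈ unitaryGroup A ℂ) :
    IsJam (jamOfUnitary V) := by
  refine ⟨posSemidef_vecMulVec_self_star _, ?_⟩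
  rw [← (mem_unitaryGroup_iff'.mp hV)]
  ext i j
  simp [trB, jamOfUnitary_apply, mul_apply, mul_comm]

lemma trA_kronecker_single_one_mul_jamOfUnitary (V : Matrix A A ℂ) (z : A) :
    trA ((single z z (1 : ℂ) ⊗ₖ (1 : Matrix A A ℂ)) * jamOfUnitary V)
      = vecMulVec (fun k => V k z) (star fun k => V k z) := by
  rw [trA_kronecker_single_one_mul]
  rfl

lemma exists_mem_unitaryGroup_col_eq {z o : A} (hzo : z ≠ o) {α β : ℝ} (hαβ : α ^ 2 + β ^ 2 = 1) :
    ∃ V ∈ unitaryGroup A ℂ, (fun k => V k z) = Pi.single z (α : ℂ) + Pi.single o (β : ℂ) ∧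
      trace V = (Fintype.card A - 2 + 2 * α : ℝ) := by
  set D : Matrix A A ℂ := single z z 1 + single o o 1
  set N : Matrix A A ℂ := single o z 1 - single z o 1
  refine ⟨1 + ((α : ℂ) - 1) • D + (β : ℂ) • N, ?_, ?_, ?_⟩
  · have hD : Dᴴ = D := by simp [D, conjTranspose_single]
    have hN : Nᴴ = -N := by simp [N, conjTranspose_single]
    have hDD : D * D = D := by
      simp [D, mul_add, add_mul, single_mul_single_same, single_mul_single_of_ne, hzo, hzo.symm]
    have hDN : D * N = N := by
      simp [D, N, add_mul, mul_sub, single_mul_single_same, single_mul_single_of_ne, hzo, hzo.symm]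
    have hND : N * D = N := by
      simp [D, N, mul_add, sub_mul, single_mul_single_same, single_mul_single_of_ne, hzo, hzo.symm]
      abel
    have hNN : N * N = -D := by
      simp [D, N, mul_sub, sub_mul, single_mul_single_same, single_mul_single_of_ne, hzo, hzo.symm]
      abel
    rw [mem_unitaryGroup_iff', star_eq_conjTranspose]
    simp only [conjTranspose_add, conjTranspose_smul, conjTranspose_one, hD, hN,
      Complex.star_def, map_sub, Complex.conj_ofReal, map_one, add_mul, mul_add, smul_mul_smul,
      Matrix.one_mul, Matrix.mul_one, mul_smul, hDD, hDN, hND, hNN, smul_neg, neg_mul]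
    -- the product is `1 + (α ^ 2 + β ^ 2 - 1) • D`
    linear_combination (norm := module) (congrArg (fun x : ℝ => (x : ℂ)) hαβ) • D
  · ext k
    by_cases hkz : k = z
    · subst hkz; simp [D, N, hzo, hzo.symm]
    by_cases hko : k = o
    · subst hko; simp [D, N, hzo, hzo.symm]
    · simp [D, N, hkz, hko, Ne.symm hkz, Ne.symm hko]
  · simp [D, N, trace_single_eq_of_ne, hzo, hzo.symm]
    ring

end UpperBound

section Value

variable {A : Type*} [Fintype A] [DecidableEq A]

lemma trace_vecMulVec_single_add_single {z o : A} (hzo : z ≠ o) {α β : ℝ}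
    (hαβ : α ^ 2 + β ^ 2 = 1) {φ : A → ℂ} (hφ : φ = Pi.single z (α : ℂ) + Pi.single o (β : ℂ)) :
    trace (vecMulVec φ (star φ)) = 1 := by
  rw [trace_vecMulVec, hφ]
  simp [dotProduct_add, hzo, hzo.symm]
  exact_mod_cast (by linear_combination hαβ : α * α + β * β = 1)

lemma le_re_trace_cost {z o : A} (hzo : z ≠ o) {α β : ℝ} (hα : 0 ≤ α) (hαβ : α ^ 2 + β ^ 2 = 1)
    {φ : A → ℂ} (hφ : φ = Pi.single z (α : ℂ) + Pi.single o (β : ℂ))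
    {J : Matrix (A × A) (A × A) ℂ} (hJ : IsJam J)
    (hJφ : trA ((single z z (1 : ℂ) ⊗ₖ (1 : Matrix A A ℂ)) * J) = vecMulVec φ (star φ)) :
    (1 - α) * (Fintype.card A + 2 * α) ≤
      (trace ((Fintype.card A • (1 : Matrix (A × A) (A × A) ℂ) - swap A) *
        jordan (single z z (1 : ℂ) ⊗ₖ (1 : Matrix A A ℂ)) J)).re := by
  obtain ⟨b, hb⟩ := hJ.1.exists_eq_gram
  have hJb : ∀ p q, J p q = ⟪b (q.1, p.2), b (p.1, q.2)⟫_ℂ := fun p q => by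
    rw [← ptA_ptA J, hb]; rfl
  have hrows : ∀ i j, ∑ k, ⟪b (i, k), b (j, k)⟫_ℂ = (1 : Matrix A A ℂ) i j := fun i j => by
    simpa [trB, hJb, one_apply, eq_comm] using congrFun (congrFun hJ.2 j) i
  have hblock : ∀ k l, ⟪b (z, k), b (z, l)⟫_ℂ = φ k * starRingEnd ℂ (φ l) := fun k l => by
    simpa [trA_kronecker_single_one_mul, hJb, vecMulVec_apply] using congrFun (congrFun hJφ k) l
  rw [re_trace_cost _ _ hJ.1.isHermitian.of_ptA, ← trA_kronecker_single_one_mul,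
    hJφ, trace_vecMulVec_single_add_single hzo hαβ hφ]
  have := re_sum_inner_diag_le hzo hα hαβ hφ hrows hblock
  simp only [hJb, Complex.one_re, mul_one]
  linarith

lemma exists_isJam_re_trace_cost_eq {z o : A} (hzo : z ≠ o) {α β : ℝ}
    (hαβ : α ^ 2 + β ^ 2 = 1) {φ : A → ℂ} (hφ : φ = Pi.single z (α : ℂ) + Pi.single o (β : ℂ)) :
    ∃ J : Matrix (A × A) (A × A) ℂ, IsJam J ∧
      trA ((single z z (1 : ℂ) ⊗ₖ (1 : Matrix A A ℂ)) * J) = vecMulVec φ (star φ) ∧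
      (trace ((Fintype.card A • (1 : Matrix (A × A) (A × A) ℂ) - swap A) *
        jordan (single z z (1 : ℂ) ⊗ₖ (1 : Matrix A A ℂ)) J)).re
        = (1 - α) * (Fintype.card A + 2 * α) := by
  obtain ⟨V, hV, hVz, htrV⟩ := exists_mem_unitaryGroup_col_eq hzo hαβ
  have hJφ := trA_kronecker_single_one_mul_jamOfUnitary V z
  rw [hVz, ← hφ] at hJφ
  refine ⟨jamOfUnitary V, isJam_jamOfUnitary hV, hJφ, ?_⟩
  have hVzz : V z z = α := by simpa [hzo] using congrFun hVz z
  rw [re_trace_cost _ _ (isJam_jamOfUnitary hV).1.isHermitian.of_ptA,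
    ← trA_kronecker_single_one_mul, hJφ, trace_vecMulVec_single_add_single hzo hαβ hφ,
    sum_jamOfUnitary_apply, htrV, hVzz]
  simp only [Complex.one_re, Complex.star_def, Complex.conj_ofReal, ← Complex.ofReal_mul,
    Complex.ofReal_re]
  ring

theorem isLeast_re_trace_cost {z o : A} (hzo : z ≠ o) {α β : ℝ} (hα : 0 ≤ α)
    (hαβ : α ^ 2 + β ^ 2 = 1) {φ : A → ℂ} (hφ : φ = Pi.single z (α : ℂ) + Pi.single o (β : ℂ)) :
    IsLeast { r : ℝ | ∃ J : Matrix (A × A) (A × A) ℂ, IsJam J ∧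
        trA ((single z z (1 : ℂ) ⊗ₖ (1 : Matrix A A ℂ)) * J) = vecMulVec φ (star φ) ∧
        r = (trace ((Fintype.card A • (1 : Matrix (A × A) (A × A) ℂ) - swap A) *
          jordan (single z z (1 : ℂ) ⊗ₖ (1 : Matrix A A ℂ)) J)).re }
      ((1 - α) * (Fintype.card A + 2 * α)) := by
  refine ⟨?_, ?_⟩
  · obtain ⟨J, hJ, hJφ, hcost⟩ := exists_isJam_re_trace_cost_eq hzo hαβ hφ
    exact ⟨J, hJ, hJφ, hcost.symm⟩
  · rintro r ⟨J, hJ, hJφ, rfl⟩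
    exact le_re_trace_cost hzo hα hαβ hφ hJ hJφ

end Value

theorem stmt17 (d : ℕ) (hd : 2 ≤ d) (α : ℝ) (hα0 : 0 ≤ α) (hα1 : α ≤ 1)
    (e₀ : Fin d → ℂ) (he₀ : e₀ = fun i => if i = (⟨0, by omega⟩ : Fin d) then 1 else 0)
    (φ : Fin d → ℂ)
    (hφ : φ = fun i => if i = (⟨0, by omega⟩ : Fin d) then (α : ℂ)
        else if i = (⟨1, by omega⟩ : Fin d) then ((Real.sqrt (1 - α ^ 2) : ℝ) : ℂ) else 0)
    (ρ σ : Matrix (Fin d) (Fin d) ℂ)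
    (hρ : ρ = Matrix.vecMulVec e₀ (star e₀))
    (hσ : σ = Matrix.vecMulVec φ (star φ)) :
    sInf { r : ℝ | ∃ J : Matrix (Fin d × Fin d) (Fin d × Fin d) ℂ, IsJam J ∧
        trA ((ρ ⊗ₖ (1 : Matrix (Fin d) (Fin d) ℂ)) * J) = σ ∧
        r = (Matrix.trace
          ((d • (1 : Matrix (Fin d × Fin d) (Fin d × Fin d) ℂ) - swap (Fin d)) *
            jordan (ρ ⊗ₖ (1 : Matrix (Fin d) (Fin d) ℂ)) J)).re } =
      (1 - α) * (d + 2 * α) := by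
  set z : Fin d := ⟨0, by omega⟩
  set o : Fin d := ⟨1, by omega⟩
  have hzo : z ≠ o := by simp [z, o, Fin.ext_iff]
  have hαβ : α ^ 2 + √(1 - α ^ 2) ^ 2 = 1 := by
    rw [Real.sq_sqrt (by nlinarith)]; ring
  have hφ' : φ = Pi.single z (α : ℂ) + Pi.single o ((√(1 - α ^ 2) : ℝ) : ℂ) := by
    funext i
    by_cases hiz : i = z
    · simp [hφ, hiz, hzo]
    · simp [hφ, hiz, Pi.single_apply]
  have hρ' : ρ = single z z 1 := by
    rw [hρ, he₀, single_eq_single_vecMulVec_single]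
    congr 1 <;> funext i <;> simp [Pi.single_apply]
  subst hρ' hσ
  simpa using (isLeast_re_trace_cost hzo hα0 hαβ hφ').csInf_eq
end
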